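/- arXiv:1310.0776 — 12 statements merged into one kernel-verified Lean document; each statement's English description precedes it below -/
import Mathlib

section
/- Let Q be a prime power, β ∈ F_{Q^2} with β^{Q+1} = 1, and γ ∈ F_{Q^2} with γ^{Q+1} ≠ 1. Then the map x ↦ (x - γ^Q β)/(γx - β) induces a bijection of the set μ_{Q+1} of (Q+1)-th roots of unity in F_{Q^2} onto itself. (The denominator γx - β is nonzero for x ∈ μ_{Q+1}.) -/
theorem stmt_1 (p e Q : ℕ) (hp : p.Prime) (he : 0 < e) (hQ : Q = p ^ e)
    (F : Type*) [Field F] [Fintype F] (hF : Fintype.card F = Q ^ 2)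
    (β γ : F) (hβ : β ^ (Q + 1) = 1) (hγ : γ ^ (Q + 1) ≠ 1) :
    Set.BijOn (fun x => (x - γ ^ Q * β) / (γ * x - β))
      {x : F | x ^ (Q + 1) = 1} {x : F | x ^ (Q + 1) = 1} := by
  haveI : Fact p.Prime := ⟨hp⟩
  -- characteristic
  have hchar : CharP F p := by
    rcases FiniteField.card F (ringChar F) with ⟨n, hr, hcard⟩
    have hdvd : p ∣ ringChar F ^ (n : ℕ) := by
      rw [← hcard, hF, hQ, ← pow_mul]
      exact dvd_pow_self p (by positivity)
    have : p = ringChar F := ((Nat.prime_dvd_prime_iff_eq hp hr).mp (hp.dvd_of_dvd_pow hdvd))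
    rw [this]; exact ringChar.charP F
  have hQ0 : Q ≠ 0 := by rw [hQ]; exact pow_ne_zero e hp.pos.ne'
  have hsub : ∀ a b : F, (a - b) ^ Q = a ^ Q - b ^ Q := by
    intro a b; rw [hQ]; exact sub_pow_char_pow a b e
  have hQQ : ∀ a : F, (a ^ Q) ^ Q = a := by
    intro a
    rw [← pow_mul, ← sq, ← hF]
    exact FiniteField.pow_card a
  -- β, x nonzero facts
  have hβQ : β ^ Q * β = 1 := by rw [← pow_succ]; exact hβ
  have hβ0 : β ≠ 0 := by
    intro h; rw [h] at hβ; simp [zero_pow (Nat.succ_ne_zero Q)] at hβ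
  have hγ1 : γ ^ Q * γ ≠ 1 := by rw [← pow_succ]; exact hγ
  -- denominator nonzero on μ
  have hden : ∀ x : F, x ^ (Q + 1) = 1 → γ * x - β ≠ 0 := by
    intro x hx h
    have hxb : γ * x = β := sub_eq_zero.mp h
    apply hγ
    have : (γ * x) ^ (Q + 1) = 1 := by rw [hxb]; exact hβ
    rw [mul_pow, hx, mul_one] at this
    exact this
  -- numerator nonzero on μ
  have hnum : ∀ x : F, x ^ (Q + 1) = 1 → x - γ ^ Q * β ≠ 0 := by
    intro x hx h
    have hxb : x = γ ^ Q * β := sub_eq_zero.mp h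
    have h1 : (γ ^ (Q + 1)) ^ Q = 1 := by
      have hthis := hx
      rw [hxb, mul_pow, ← pow_mul, hβ, mul_one] at hthis
      rw [← pow_mul, mul_comm]; exact hthis
    have h2 : (γ ^ (Q + 1)) ^ Q = 1 ^ Q := by rw [h1, one_pow]
    have h3 : (γ ^ (Q + 1) - 1) ^ Q = 0 := by
      rw [hsub, h2]; ring
    have h4 := pow_eq_zero_iff hQ0 |>.mp h3
    exact hγ (sub_eq_zero.mp h4)
  -- maps to
  have hmaps : Set.MapsTo (fun x => (x - γ ^ Q * β) / (γ * x - β))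
      {x : F | x ^ (Q + 1) = 1} {x : F | x ^ (Q + 1) = 1} := by
    intro x hx
    simp only [Set.mem_setOf_eq] at hx ⊢
    have hxQ : x ^ Q * x = 1 := by rw [← pow_succ]; exact hx
    have key : (x - γ ^ Q * β) ^ (Q + 1) = (γ * x - β) ^ (Q + 1) := by
      rw [pow_succ, pow_succ, hsub, hsub, mul_pow, mul_pow, hQQ]
      linear_combination (1 - γ * γ ^ Q) * hxQ - (1 - γ * γ ^ Q) * hβQ
    rw [div_pow, key, div_self (pow_ne_zero _ (hden x hx))]
  -- injectivity
  have hinj : Set.InjOn (fun x => (x - γ ^ Q * β) / (γ * x - β))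
      {x : F | x ^ (Q + 1) = 1} := by
    intro x hx y hy hxy
    simp only [Set.mem_setOf_eq] at hx hy
    simp only at hxy
    rw [div_eq_div_iff (hden x hx) (hden y hy)] at hxy
    have h0 : (1 - γ ^ Q * γ) * β * (x - y) = 0 := by linear_combination -hxy
    rcases mul_eq_zero.mp h0 with h | h
    · rcases mul_eq_zero.mp h with h | h
      · exact absurd (by linear_combination -h : γ ^ Q * γ = 1) hγ1
      · exact absurd h hβ0
    · exact sub_eq_zero.mp h
  exact (Set.Finite.injOn_iff_bijOn_of_mapsTo (Set.toFinite _) hmaps).mp hinj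
end

section
/- Let Q be a prime power and ℓ(x) = (αx - δ)/(γx - β) a degree-one rational function with α, β, γ, δ ∈ F_{Q^2}, αβ ≠ γδ, such that β/γ ∉ μ_{Q+1} (i.e., ℓ has no pole on μ_{Q+1}). If ℓ induces a bijection on μ_{Q+1}, then either (i) α = β = 0 and (-δ/γ)^{Q+1} = 1, so ℓ(x) = (-δ/γ)/x with -δ/γ ∈ μ_{Q+1}; or (ii) α ≠ 0 and, setting β' = β/α, γ' = γ/α, one has δ/α = γ'^Q β', β'^{Q+1} = 1, and γ'^{Q+1} ≠ 1. -/
theorem quad_aux {F : Type*} [Field F] {A B C x y z : F}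
    (hxy : x ≠ y) (hyz : y ≠ z) (hxz : x ≠ z)
    (h1 : A*x^2 + B*x + C = 0) (h2 : A*y^2 + B*y + C = 0)
    (h3 : A*z^2 + B*z + C = 0) : A = 0 ∧ B = 0 ∧ C = 0 := by
  have e1 : (x - y) * (A*(x+y) + B) = 0 := by linear_combination h1 - h2
  have e2 : (y - z) * (A*(y+z) + B) = 0 := by linear_combination h2 - h3
  have f1 : A*(x+y) + B = 0 :=
    (mul_eq_zero.1 e1).resolve_left (fun h => hxy (sub_eq_zero.1 h))
  have f2 : A*(y+z) + B = 0 :=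
    (mul_eq_zero.1 e2).resolve_left (fun h => hyz (sub_eq_zero.1 h))
  have e3 : A * (x - z) = 0 := by linear_combination f1 - f2
  have hA : A = 0 :=
    (mul_eq_zero.1 e3).resolve_right (fun h => hxz (sub_eq_zero.1 h))
  have hB : B = 0 := by linear_combination f1 - (x+y) * hA
  exact ⟨hA, hB, by linear_combination h1 - (x^2) * hA - x * hB⟩

theorem stmt_2 (p e Q : ℕ) (hp : p.Prime) (he : 0 < e) (hQ : Q = p ^ e)
    (F : Type*) [Field F] [Fintype F] (hF : Fintype.card F = Q ^ 2)
    (α β γ δ : F) (hdet : α * β ≠ γ * δ) (hpole : (β / γ) ^ (Q + 1) ≠ 1)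
    (hbij : Set.BijOn (fun x => (α * x - δ) / (γ * x - β))
      {x : F | x ^ (Q + 1) = 1} {x : F | x ^ (Q + 1) = 1}) :
    (α = 0 ∧ β = 0 ∧ (-δ / γ) ^ (Q + 1) = 1) ∨
    (α ≠ 0 ∧ δ / α = (γ / α) ^ Q * (β / α) ∧ (β / α) ^ (Q + 1) = 1 ∧
      (γ / α) ^ (Q + 1) ≠ 1) := by
  have hQ2 : 2 ≤ Q := hQ ▸ Nat.one_lt_pow he.ne' hp.one_lt
  -- characteristic
  obtain ⟨c, hc⟩ := CharP.exists F
  haveI := hc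
  obtain ⟨n, hcp, hcard⟩ := FiniteField.card F c
  have hcard' : c ^ (n : ℕ) = p ^ (2 * e) := by
    rw [← hcard, hF, hQ, ← pow_mul, mul_comm]
  have hceq : c = p := by
    have h1 : c ∣ p ^ (2 * e) := hcard' ▸ dvd_pow_self c n.pos.ne'
    exact (Nat.prime_dvd_prime_iff_eq hcp hp).1 (hcp.dvd_of_dvd_pow h1)
  haveI hpF : CharP F p := hceq ▸ hc
  haveI : Fact p.Prime := ⟨hp⟩
  have frob : ∀ a b : F, (a - b) ^ Q = a ^ Q - b ^ Q := by
    subst hQ; exact fun a b => sub_pow_char_pow a b e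
  have pc : ∀ a : F, a ^ (Q * Q) = a := fun a => by
    have := FiniteField.pow_card a
    rwa [hF, pow_two] at this
  -- the key pointwise identity
  have key : ∀ x : F, x ^ (Q + 1) = 1 →
      (α^Q - δ^Q*x)*(α*x-δ) = (γ^Q - β^Q*x)*(γ*x-β) := by
    intro x hx
    have hden : γ * x - β ≠ 0 := by
      intro h
      by_cases hγ : γ = 0
      · have hβ : β = 0 := by rw [hγ] at h; linear_combination -h
        exact hdet (by rw [hβ, hγ, mul_zero, zero_mul])
      · apply hpole
        have hxe : β / γ = x := by field_simp; linear_combination -h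
        rw [hxe]; exact hx
    have himg : ((α * x - δ) / (γ * x - β)) ^ (Q + 1) = 1 := hbij.mapsTo hx
    have hE' : (α*x-δ)^(Q+1) = (γ*x-β)^(Q+1) := by
      rw [div_pow, div_eq_one_iff_eq (pow_ne_zero _ hden)] at himg
      exact himg
    have hE'' : (α^Q*x^Q - δ^Q)*(α*x-δ) = (γ^Q*x^Q - β^Q)*(γ*x-β) := by
      rw [pow_succ, pow_succ, frob, frob, mul_pow, mul_pow] at hE'
      exact hE'
    have hX : x^Q * x = 1 := by rw [← pow_succ]; exact hx
    linear_combination x * hE'' - (α^Q*(α*x-δ) - γ^Q*(γ*x-β)) * hX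
  -- three distinct points of μ
  obtain ⟨g, hg⟩ := IsCyclic.exists_ofOrder_eq_natCard (α := Fˣ)
  have hcardu : Nat.card Fˣ = Q ^ 2 - 1 := by
    rw [Nat.card_units, Nat.card_eq_fintype_card, hF]
  have hfac : Q ^ 2 - 1 = (Q + 1) * (Q - 1) := by
    obtain ⟨k, rfl⟩ : ∃ k, Q = k + 1 := ⟨Q - 1, by omega⟩
    simp only [Nat.add_sub_cancel]
    rw [Nat.sub_eq_iff_eq_add (by nlinarith)]
    ring
  have hdvd : (Q - 1) ∣ Q ^ 2 - 1 := hfac ▸ dvd_mul_left _ _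
  have hζord : orderOf (g ^ (Q - 1)) = Q + 1 := by
    rw [orderOf_pow, hg, hcardu, Nat.gcd_eq_right hdvd, hfac,
      Nat.mul_div_cancel _ (by omega)]
  set ζu : Fˣ := g ^ (Q - 1) with hζu
  set ζ : F := (ζu : F) with hζ
  have hζpow : ζ ^ (Q + 1) = 1 := by
    rw [hζ, ← Units.val_pow_eq_pow_val, ← hζord, pow_orderOf_eq_one, Units.val_one]
  have hζne1 : ζ ≠ 1 := by
    intro h
    have h2 : ζu = 1 := Units.ext h
    have h3 := orderOf_eq_one_iff.2 h2
    rw [hζord] at h3; omega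
  have hζ2ne1 : ζ ^ 2 ≠ 1 := by
    intro h
    have h2 : ζu ^ 2 = 1 := Units.ext (by
      rw [Units.val_pow_eq_pow_val, Units.val_one]; exact h)
    have h3 := Nat.le_of_dvd (by norm_num) (orderOf_dvd_of_pow_eq_one h2)
    rw [hζord] at h3; omega
  have hζ2pow : (ζ ^ 2) ^ (Q + 1) = 1 := by
    rw [← pow_mul, mul_comm, pow_mul, hζpow, one_pow]
  -- distinctness
  have d12 : (1 : F) ≠ ζ := fun h => hζne1 h.symm
  have d23 : ζ ≠ ζ ^ 2 := by
    intro h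
    have hζ0 : ζ ≠ 0 := by
      intro h0
      rw [h0, zero_pow (by omega)] at hζpow
      exact zero_ne_one hζpow
    apply hζne1
    have : ζ * 1 = ζ * ζ := by rw [mul_one]; rw [pow_two] at h; exact h
    exact (mul_left_cancel₀ hζ0 this).symm
  have d13 : (1 : F) ≠ ζ ^ 2 := fun h => hζ2ne1 h.symm
  -- quadratic coefficients vanish
  have q1 : (γ*β^Q - α*δ^Q)*(1:F)^2 + (α^Q*α + δ^Q*δ - γ^Q*γ - β^Q*β)*1
      + (γ^Q*β - α^Q*δ) = 0 := by linear_combination key 1 (one_pow _)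
  have q2 : (γ*β^Q - α*δ^Q)*ζ^2 + (α^Q*α + δ^Q*δ - γ^Q*γ - β^Q*β)*ζ
      + (γ^Q*β - α^Q*δ) = 0 := by linear_combination key ζ hζpow
  have q3 : (γ*β^Q - α*δ^Q)*(ζ^2)^2 + (α^Q*α + δ^Q*δ - γ^Q*γ - β^Q*β)*(ζ^2)
      + (γ^Q*β - α^Q*δ) = 0 := by linear_combination key (ζ^2) hζ2pow
  obtain ⟨hA, hB, hC⟩ := quad_aux d12 d23 d13 q1 q2 q3
  have hB' : α^Q*α + δ^Q*δ = γ^Q*γ + β^Q*β := by linear_combination hB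
  have hC' : α^Q*δ = γ^Q*β := by linear_combination -hC
  by_cases hα : α = 0
  · -- case (i)
    left
    have hγ : γ ≠ 0 := by
      rintro rfl
      rw [hα] at hdet
      exact hdet (by rw [zero_mul, zero_mul])
    have hβ : β = 0 := by
      have h := hC'
      rw [hα, zero_pow (by omega), zero_mul] at h
      exact (mul_eq_zero.1 h.symm).resolve_left (pow_ne_zero _ hγ)
    have hδγ : δ^(Q+1) = γ^(Q+1) := by
      rw [pow_succ, pow_succ]
      have h := hB'
      rw [hα, hβ] at h
      linear_combination h
    refine ⟨hα, hβ, ?_⟩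
    have hneg : (-1 : F)^(Q+1) = 1 := by
      rcases Nat.even_or_odd (Q + 1) with hev | hodd
      · exact hev.neg_one_pow
      · have hQeven : 2 ∣ Q := (Nat.not_odd_iff_even.1 (Nat.odd_add_one.1 hodd)).two_dvd
        have hp2 : p = 2 := by
          have : (2:ℕ) ∣ p ^ e := hQ ▸ hQeven
          have := (Nat.prime_two.dvd_of_dvd_pow this)
          exact ((Nat.prime_dvd_prime_iff_eq Nat.prime_two hp).1 this).symm
        haveI : CharP F 2 := hp2 ▸ hpF
        rw [CharTwo.neg_eq, one_pow]
    rw [neg_div, neg_pow, div_pow, hδγ, div_self (pow_ne_zero _ hγ), mul_one, hneg]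
  · -- case (ii)
    right
    have hAeq : α * δ^Q = γ * β^Q := by
      have h := congrArg (· ^ Q) hC'
      simp only [mul_pow, ← pow_mul] at h
      rwa [pc, pc] at h
    have h1 : (α^Q*α) * (δ^Q*δ) = (β^Q*β) * (γ^Q*γ) := by
      linear_combination (α*δ^Q) * hC' + (γ^Q*β) * hAeq
    have h0 : (α^Q*α - β^Q*β) * (α^Q*α - γ^Q*γ) = 0 := by
      linear_combination (α^Q*α) * hB' - h1
    have hγne : α^Q*α - γ^Q*γ ≠ 0 := by
      intro h
      apply hdet
      have h2 : α^Q * (α*β) = α^Q * (γ*δ) := by linear_combination β*h - γ*hC'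
      exact mul_left_cancel₀ (pow_ne_zero _ hα) h2
    have hβeq : α^Q*α = β^Q*β :=
      sub_eq_zero.1 ((mul_eq_zero.1 h0).resolve_right hγne)
    refine ⟨hα, ?_, ?_, ?_⟩
    · rw [div_pow, div_mul_div_comm,
        div_eq_div_iff hα (mul_ne_zero (pow_ne_zero _ hα) hα)]
      linear_combination α * hC'
    · rw [div_pow, div_eq_one_iff_eq (pow_ne_zero _ hα), pow_succ, pow_succ]
      exact hβeq.symm
    · intro h
      apply hγne
      rw [div_pow] at h
      have hαQ : α^(Q+1) ≠ 0 := pow_ne_zero _ hα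
      have h2 : γ^(Q+1) = α^(Q+1) := by
        field_simp at h; exact h
      rw [pow_succ, pow_succ] at h2
      linear_combination -h2
end

section
/- Let Q be a prime power, β ∈ F_{Q^2} with β^{Q+1} = 1, and δ ∈ F_{Q^2} \ F_Q. Then the map x ↦ (δx - βδ^Q)/(x - β) induces a bijection from μ_{Q+1} \ {β} onto F_Q. (Here F_Q is viewed as a subfield of F_{Q^2}.) -/
/-!
Write `σ x = x ^ Q`, an involutive automorphism of `F` whose fixed field is `F_Q` and for which
`μ_{Q+1} = {x | σ x * x = 1}`. The map is the linear fractional transformation with matrix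
`[[δ, -β σδ], [1, -β]]`, of determinant `β (σδ - δ) ≠ 0`, so it is injective off its pole `β`.
On `μ_{Q+1}` we have `σ x = x⁻¹` and `σ β = β⁻¹`; applying `σ` to the image of `x` and clearing the
denominators `x β` returns the same expression, so the image lies in `F_Q`. Conversely
`y ↦ β (σδ - y) / (δ - y)` inverts the map on `F_Q`.
-/

section LinearFractional

variable {F : Type*} [Field F]

theorem injOn_linearFractional {β γ δ : F} (hβ : β ≠ 0) (hγ : γ ≠ δ) :
    Set.InjOn (fun x => (δ * x - β * γ) / (x - β)) {β}ᶜ := by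
  intro x hx y hy hxy
  rw [div_eq_div_iff (sub_ne_zero.mpr hx) (sub_ne_zero.mpr hy)] at hxy
  have hdet : β * (γ - δ) * (x - y) = 0 := by linear_combination hxy
  simpa [sub_eq_zero, hβ, sub_ne_zero.mpr hγ] using hdet

variable {σ : F →+* F}

theorem map_linearFractional_eq_self (hσ : Function.Involutive σ) {β δ x : F}
    (hβ : σ β * β = 1) (hx : σ x * x = 1) (hxβ : x ≠ β) :
    σ ((δ * x - β * σ δ) / (x - β)) = (δ * x - β * σ δ) / (x - β) := by
  rw [map_div₀, map_sub, map_sub, map_mul, map_mul, hσ δ,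
    div_eq_div_iff (sub_ne_zero.mpr (hσ.injective.ne hxβ)) (sub_ne_zero.mpr hxβ)]
  linear_combination (σ δ - δ) * hx - (σ δ - δ) * hβ

theorem surjOn_linearFractional (hσ : Function.Involutive σ) {β δ : F}
    (hβ : σ β * β = 1) (hδ : σ δ ≠ δ) :
    Set.SurjOn (fun x => (δ * x - β * σ δ) / (x - β))
      ({x | σ x * x = 1} \ {β}) {y | σ y = y} := by
  intro y (hy : σ y = y)
  have hβ₀ : β ≠ 0 := right_ne_zero_of_mul_eq_one hβ
  have hδy : δ - y ≠ 0 := sub_ne_zero.mpr fun h => hδ (by rw [h, hy])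
  have hσδy : σ δ - y ≠ 0 := sub_ne_zero.mpr fun h => hδ (by rw [h, ← hσ δ, h, hy])
  have hxβ : β * (σ δ - y) / (δ - y) ≠ β := fun h => by
    rw [div_eq_iff hδy] at h
    exact hδ (sub_left_inj.mp (mul_left_cancel₀ hβ₀ h))
  refine ⟨β * (σ δ - y) / (δ - y), ⟨?_, hxβ⟩, ?_⟩
  · change σ _ * _ = 1
    simp only [map_div₀, map_mul, map_sub, hσ δ, hy]
    field_simp
    linear_combination hβ
  · change _ / _ = y
    rw [div_eq_iff (sub_ne_zero.mpr hxβ)]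
    field_simp
    ring

theorem bijOn_linearFractional (hσ : Function.Involutive σ) {β δ : F}
    (hβ : σ β * β = 1) (hδ : σ δ ≠ δ) :
    Set.BijOn (fun x => (δ * x - β * σ δ) / (x - β))
      ({x | σ x * x = 1} \ {β}) {y | σ y = y} :=
  ⟨fun _ hx => map_linearFractional_eq_self hσ hβ hx.1 hx.2,
    (injOn_linearFractional (right_ne_zero_of_mul_eq_one hβ) hδ).mono (Set.sdiff_subset_compl _ _),
    surjOn_linearFractional hσ hβ hδ⟩

end LinearFractional

theorem stmt_3_general (p e Q : ℕ) (hp : p.Prime) (hQ : Q = p ^ e)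
    (F : Type*) [Field F] [Fintype F] (hF : Fintype.card F = Q ^ 2)
    (β δ : F) (hβ : β ^ (Q + 1) = 1) (hδ : δ ^ Q ≠ δ) :
    Set.BijOn (fun x => (δ * x - β * δ ^ Q) / (x - β))
      ({x : F | x ^ (Q + 1) = 1} \ {β}) {x : F | x ^ Q = x} := by
  have : Fact p.Prime := ⟨hp⟩
  have : CharP F p := charP_of_card_eq_prime_pow (f := e * 2) (by rw [hF, hQ, ← pow_mul])
  have hσ : ∀ x, iterateFrobenius F p e x = x ^ Q := fun x => by rw [hQ, iterateFrobenius_def]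
  have hinv : Function.Involutive (iterateFrobenius F p e) := fun x => by
    rw [hσ, hσ, ← pow_mul, ← sq, ← hF, FiniteField.pow_card]
  have hbij := bijOn_linearFractional hinv (β := β) (δ := δ)
    (by rw [hσ, ← pow_succ, hβ]) (by rwa [hσ])
  simpa only [hσ, ← pow_succ] using hbij

theorem stmt_3 (p e Q : ℕ) (hp : p.Prime) (he : 0 < e) (hQ : Q = p ^ e)
    (F : Type*) [Field F] [Fintype F] (hF : Fintype.card F = Q ^ 2)
    (β δ : F) (hβ : β ^ (Q + 1) = 1) (hδ : δ ^ Q ≠ δ) :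
    Set.BijOn (fun x => (δ * x - β * δ ^ Q) / (x - β))
      ({x : F | x ^ (Q + 1) = 1} \ {β}) {x : F | x ^ Q = x} :=
  stmt_3_general p e Q hp hQ F hF β δ hβ hδ
end

section
/- Let q be a prime power, h ∈ F_q[x], and d, r positive integers with d dividing q - 1. Then f(x) := x^r · h(x^{(q-1)/d}) permutes F_q if and only if gcd(r, (q-1)/d) = 1 and the map x ↦ x^r · h(x)^{(q-1)/d} permutes the set μ_d of d-th roots of unity in F_q. -/
/-!
Write `s = (q - 1) / d`, `f x = x ^ r * h (x ^ s)` and `g x = x ^ r * h x ^ s`. Then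
`f x ^ s = g (x ^ s)`, and `x ↦ x ^ s` maps `F^*` onto `μ_d`. Hence `f` permuting `F` forces `h`
to be nonzero on `μ_d` (so `g` maps `μ_d` to itself) and `g` to be onto `μ_d`, while `f u = f 1`
for every `u` with `u ^ r = u ^ s = 1`, which forces `gcd(r, s) = 1` by Cauchy's theorem.
Conversely, if `f x = f y` with `x, y ≠ 0`, injectivity of `g` on `μ_d` gives `x ^ s = y ^ s`,
cancelling `h (x ^ s)` gives `x ^ r = y ^ r`, and coprimality gives `x = y`.
-/

open Function Polynomial Set

theorem IsCyclic.exists_pow_eq_of_pow_eq_one {G : Type*} [CommGroup G] [IsCyclic G] [Finite G]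
    {d s : ℕ} (hds : Nat.card G = d * s) {c : G} (hc : c ^ d = 1) : ∃ x : G, x ^ s = c := by
  have hs : s ≠ 0 := by
    rintro rfl
    exact Nat.card_pos.ne' hds
  have hle : (powMonoidHom s : G →* G).range ≤ (powMonoidHom d).ker := by
    rintro _ ⟨x, rfl⟩
    simp [← pow_mul, mul_comm s d, ← hds, pow_card_eq_one']
  -- both subgroups have order `d` in the cyclic group of order `d * s`
  have hcard :
      Nat.card (powMonoidHom d : G →* G).ker ≤ Nat.card (powMonoidHom s : G →* G).range := by
    rw [IsCyclic.card_powMonoidHom_ker, IsCyclic.card_powMonoidHom_range, hds,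
      Nat.gcd_mul_right_left, Nat.gcd_mul_left_left, Nat.mul_div_cancel _ (Nat.pos_of_ne_zero hs)]
  have hc' : c ∈ (powMonoidHom d : G →* G).ker := hc
  rw [← Subgroup.eq_of_le_of_card_ge hle hcard] at hc'
  exact hc'

theorem gcd_eq_one_of_forall_pow_eq_one {G : Type*} [Group G] [Finite G] {r s : ℕ}
    (hs : s ∣ Nat.card G) (H : ∀ u : G, u ^ r = 1 → u ^ s = 1 → u = 1) : r.gcd s = 1 := by
  by_contra hne
  obtain ⟨p, hp, hpdvd⟩ := Nat.exists_prime_and_dvd hne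
  have := Fact.mk hp
  obtain ⟨u, hu⟩ :=
    exists_prime_orderOf_dvd_card' p ((hpdvd.trans (Nat.gcd_dvd_right r s)).trans hs)
  obtain ⟨hur, hus⟩ := pow_gcd_eq_one.mp (orderOf_dvd_iff_pow_eq_one.mp (hu ▸ hpdvd))
  rw [H u hur hus, orderOf_one] at hu
  exact hp.one_lt.ne hu

section FiniteField

variable {F : Type*} [Field F] [Fintype F] {d s : ℕ}

theorem FiniteField.card_sub_one_ne_zero : Fintype.card F - 1 ≠ 0 :=
  (tsub_pos_of_lt Fintype.one_lt_card).ne'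

theorem FiniteField.pow_pow_eq_one (hds : Fintype.card F - 1 = d * s) {x : F} (hx : x ≠ 0) :
    (x ^ s) ^ d = 1 := by
  rw [← pow_mul, mul_comm, ← hds, FiniteField.pow_card_sub_one_eq_one x hx]

theorem FiniteField.exists_ne_zero_pow_eq (hds : Fintype.card F - 1 = d * s) {c : F}
    (hc : c ^ d = 1) : ∃ x : F, x ≠ 0 ∧ x ^ s = c := by
  obtain ⟨u, rfl⟩ :=
    IsUnit.of_pow_eq_one hc (left_ne_zero_of_mul (hds ▸ FiniteField.card_sub_one_ne_zero))
  obtain ⟨x, hx⟩ := IsCyclic.exists_pow_eq_of_pow_eq_one (G := Fˣ)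
    (by rw [Nat.card_units, Nat.card_eq_fintype_card, hds]) (Units.ext (by simpa using hc))
  exact ⟨x, x.ne_zero, by rw [← Units.val_pow_eq_pow_val, hx]⟩

end FiniteField

section PowMulEval

variable {R : Type*} [CommSemiring R] (h : R[X]) (r s : ℕ)

def powMulEvalPow (x : R) : R := x ^ r * h.eval (x ^ s)

def powMulPowEval (x : R) : R := x ^ r * h.eval x ^ s

theorem powMulEvalPow_pow (x : R) : powMulEvalPow h r s x ^ s = powMulPowEval h r s (x ^ s) := by
  simp only [powMulEvalPow, powMulPowEval, mul_pow, ← pow_mul, mul_comm r s]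

theorem powMulEvalPow_zero (hr : r ≠ 0) : powMulEvalPow h r s (0 : R) = 0 := by
  simp [powMulEvalPow, zero_pow hr]

end PowMulEval

section Permutation

variable {F : Type*} [Field F] [Fintype F] {h : F[X]} {d r s : ℕ}

theorem mapsTo_powMulPowEval_iff (hds : Fintype.card F - 1 = d * s) :
    MapsTo (powMulPowEval h r s) {x | x ^ d = 1} {x | x ^ d = 1} ↔
      ∀ c : F, c ^ d = 1 → h.eval c ≠ 0 := by
  refine forall₂_congr fun c (hc : c ^ d = 1) => ?_
  have hpow : powMulPowEval h r s c ^ d = h.eval c ^ (Fintype.card F - 1) := by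
    rw [powMulPowEval, mul_pow, ← pow_mul, mul_comm r d, pow_mul, hc, one_pow, one_mul, ← pow_mul,
      mul_comm, ← hds]
  refine ⟨fun h1 h0 => ?_, fun h0 => (hpow.trans (FiniteField.pow_card_sub_one_eq_one _ h0) :)⟩
  rw [mem_ofPred_eq, hpow, h0, zero_pow FiniteField.card_sub_one_ne_zero] at h1
  exact zero_ne_one h1

theorem eval_ne_zero_of_injective (hds : Fintype.card F - 1 = d * s) (hr : r ≠ 0)
    (hf : Injective (powMulEvalPow h r s)) {c : F} (hc : c ^ d = 1) : h.eval c ≠ 0 := by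
  obtain ⟨x, hx0, rfl⟩ := FiniteField.exists_ne_zero_pow_eq hds hc
  refine fun h0 => hx0 (hf ?_)
  rw [powMulEvalPow_zero h r s hr, powMulEvalPow, h0, mul_zero]

theorem surjOn_powMulPowEval_of_surjective (hds : Fintype.card F - 1 = d * s) (hr : r ≠ 0)
    (hf : Surjective (powMulEvalPow h r s)) :
    SurjOn (powMulPowEval h r s) {x | x ^ d = 1} {x | x ^ d = 1} := by
  intro c (hc : c ^ d = 1)
  obtain ⟨y, hy0, rfl⟩ := FiniteField.exists_ne_zero_pow_eq hds hc
  obtain ⟨x, rfl⟩ := hf y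
  have hx0 : x ≠ 0 := by
    rintro rfl
    exact hy0 (powMulEvalPow_zero h r s hr)
  exact ⟨x ^ s, FiniteField.pow_pow_eq_one hds hx0, (powMulEvalPow_pow h r s x).symm⟩

theorem gcd_eq_one_of_injective (hs : s ∣ Fintype.card F - 1)
    (hf : Injective (powMulEvalPow h r s)) : r.gcd s = 1 := by
  refine gcd_eq_one_of_forall_pow_eq_one (G := Fˣ)
    (by rwa [Nat.card_units, Nat.card_eq_fintype_card]) fun u hur hus => Units.ext (hf ?_)
  simp only [powMulEvalPow, ← Units.val_pow_eq_pow_val, hur, hus, Units.val_one, one_pow]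

theorem injective_powMulEvalPow (hds : Fintype.card F - 1 = d * s) (hr : r ≠ 0)
    (hgcd : r.gcd s = 1) (hg : InjOn (powMulPowEval h r s) {x | x ^ d = 1})
    (hh : ∀ c : F, c ^ d = 1 → h.eval c ≠ 0) : Injective (powMulEvalPow h r s) := by
  have hzero_iff (x : F) : powMulEvalPow h r s x = 0 ↔ x = 0 := by
    refine ⟨not_imp_not.mp fun hx => ?_, by rintro rfl; exact powMulEvalPow_zero h r s hr⟩
    exact mul_ne_zero (pow_ne_zero _ hx) (hh _ (FiniteField.pow_pow_eq_one hds hx))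
  intro x y hxy
  have hxy0 : x = 0 ↔ y = 0 := by rw [← hzero_iff x, ← hzero_iff y, hxy]
  by_cases hx0 : x = 0
  · rw [hx0, hxy0.mp hx0]
  have hy0 : y ≠ 0 := hxy0.not.mp hx0
  have hxs : x ^ s = y ^ s := hg (FiniteField.pow_pow_eq_one hds hx0)
    (FiniteField.pow_pow_eq_one hds hy0) (by rw [← powMulEvalPow_pow, ← powMulEvalPow_pow, hxy])
  have hxr : x ^ r = y ^ r := by
    refine mul_right_cancel₀ (hh _ (FiniteField.pow_pow_eq_one hds hx0)) ?_
    rwa [powMulEvalPow, powMulEvalPow, ← hxs] at hxy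
  have hdiv : (x / y) ^ r = 1 ∧ (x / y) ^ s = 1 := by
    simp only [div_pow, hxr, hxs, div_self (pow_ne_zero _ hy0), and_self]
  exact (div_eq_one_iff_eq hy0).mp ((pow_eq_one_iff_of_coprime hgcd).mp hdiv)

end Permutation

theorem stmt_4_general (q : ℕ)
    (F : Type*) [Field F] [Fintype F] (hF : Fintype.card F = q)
    (h : Polynomial F) (d r : ℕ) (hr : 0 < r) (hdvd : d ∣ q - 1) :
    Function.Bijective (fun x : F => x ^ r * h.eval (x ^ ((q - 1) / d))) ↔
      (Nat.gcd r ((q - 1) / d) = 1 ∧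
        Set.BijOn (fun x : F => x ^ r * h.eval x ^ ((q - 1) / d))
          {x : F | x ^ d = 1} {x : F | x ^ d = 1}) := by
  subst hF
  obtain ⟨s, hds⟩ := hdvd
  have hd : d ≠ 0 := left_ne_zero_of_mul (hds ▸ FiniteField.card_sub_one_ne_zero)
  rw [hds, Nat.mul_div_cancel_left s (Nat.pos_of_ne_zero hd)]
  change Bijective (powMulEvalPow h r s) ↔ r.gcd s = 1 ∧ BijOn (powMulPowEval h r s) _ _
  rw [← Finite.injective_iff_bijective]
  constructor
  · intro hf
    have hmaps := (mapsTo_powMulPowEval_iff (r := r) hds).mpr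
      fun c => eval_ne_zero_of_injective hds hr.ne' hf
    exact ⟨gcd_eq_one_of_injective (Dvd.intro_left d hds.symm) hf,
      ((toFinite _).surjOn_iff_bijOn_of_mapsTo hmaps).mp
        (surjOn_powMulPowEval_of_surjective hds hr.ne' (Finite.injective_iff_surjective.mp hf))⟩
  · rintro ⟨hgcd, hg⟩
    exact injective_powMulEvalPow hds hr.ne' hgcd hg.injOn
      ((mapsTo_powMulPowEval_iff hds).mp hg.mapsTo)

theorem stmt_4 (p e q : ℕ) (hp : p.Prime) (he : 0 < e) (hq : q = p ^ e)
    (F : Type*) [Field F] [Fintype F] (hF : Fintype.card F = q)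
    (h : Polynomial F) (d r : ℕ) (hd : 0 < d) (hr : 0 < r) (hdvd : d ∣ q - 1) :
    Function.Bijective (fun x : F => x ^ r * h.eval (x ^ ((q - 1) / d))) ↔
      (Nat.gcd r ((q - 1) / d) = 1 ∧
        Set.BijOn (fun x : F => x ^ r * h.eval x ^ ((q - 1) / d))
          {x : F | x ^ d = 1} {x : F | x ^ d = 1}) :=
  stmt_4_general q F hF h d r hr hdvd
end

section
/- Let Q be a prime power, n > 0 and k ≥ 0 integers, β, δ ∈ F_{Q^2} with β^{Q+1} = 1 and δ ∉ F_Q. Then f(x) := x^{n+k(Q+1)} · ((δx^{Q-1} - βδ^Q)^n - δ(x^{Q-1} - β)^n) permutes F_{Q^2} if and only if gcd(n(n+2k), Q - 1) = 1. -/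
lemma qfac (Q : ℕ) (hQ2 : 2 ≤ Q) : Q ^ 2 - 1 = (Q - 1) * (Q + 1) := by
  obtain ⟨q, rfl⟩ : ∃ q, Q = q + 2 := ⟨Q - 2, by omega⟩
  have h2 : q + 2 - 1 = q + 1 := by omega
  have h3 : q + 2 + 1 = q + 3 := by omega
  have h4 : (q + 2) ^ 2 = q * q + 4 * q + 4 := by ring
  have h5 : (q + 1) * (q + 3) = q * q + 4 * q + 3 := by ring
  rw [h2, h3, h4, h5]
  omega

lemma card_units_eq (Q : ℕ) (F : Type*) [Field F] [Fintype F]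
    (hcard : Fintype.card F = Q ^ 2) (g : Fˣ) (hg : ∀ x : Fˣ, x ∈ Subgroup.zpowers g) :
    orderOf g = Q ^ 2 - 1 := by
  classical
  rw [orderOf_eq_card_of_forall_mem_zpowers hg, Nat.card_eq_fintype_card,
    Fintype.card_units, hcard]

lemma exists_eps (Q : ℕ) (hQ2 : 2 ≤ Q) (F : Type*) [Field F] [Fintype F]
    (hcard : Fintype.card F = Q ^ 2) (c : F) (hc0 : c ≠ 0) (hc : c ^ (Q + 1) = 1) :
    ∃ ε : F, ε ≠ 0 ∧ ε ^ (Q - 1) = c := by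
  classical
  obtain ⟨g, hg⟩ := IsCyclic.exists_generator (α := Fˣ)
  have hog := card_units_eq Q F hcard g hg
  set u : Fˣ := Units.mk0 c hc0 with hu
  obtain ⟨m, hm⟩ := mem_powers_iff_mem_zpowers.2 (hg u)
  have hm' : g ^ m = u := hm
  have hu1 : u ^ (Q + 1) = 1 := by
    ext; push_cast [hu]; exact hc
  have hdvd : orderOf g ∣ m * (Q + 1) := by
    apply orderOf_dvd_of_pow_eq_one
    rw [pow_mul, hm', hu1]
  rw [hog, qfac Q hQ2] at hdvd
  have hdvd2 : (Q - 1) ∣ m := (Nat.mul_dvd_mul_iff_right (by omega : 0 < Q + 1)).1 hdvd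
  obtain ⟨r, hr⟩ := hdvd2
  refine ⟨(g ^ r : Fˣ), Units.ne_zero _, ?_⟩
  have h2 : ((g ^ r) ^ (Q - 1) : Fˣ) = u := by rw [← pow_mul, mul_comm, ← hr, hm']
  calc ((g ^ r : Fˣ) : F) ^ (Q - 1) = (((g ^ r) ^ (Q - 1) : Fˣ) : F) := by
        rw [← Units.val_pow_eq_pow_val]
    _ = c := by rw [h2, hu]; rfl

lemma exists_root (Q : ℕ) (hQ2 : 2 ≤ Q) (F : Type*) [Field F] [Fintype F]
    (hcard : Fintype.card F = Q ^ 2) (m : ℕ) (hm2 : 2 ≤ m) (hmd : m ∣ Q - 1) :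
    ∃ a : F, a ≠ 1 ∧ a ^ m = 1 ∧ a ^ (Q - 1) = 1 := by
  classical
  obtain ⟨g, hg⟩ := IsCyclic.exists_generator (α := Fˣ)
  have hog := card_units_eq Q F hcard g hg
  obtain ⟨c, hcm⟩ : m ∣ Q ^ 2 - 1 := (qfac Q hQ2) ▸ hmd.mul_right _
  have hc0 : 0 < c := by
    rcases Nat.eq_zero_or_pos c with h | h
    · exfalso; rw [h, mul_zero] at hcm; have : 1 < Q ^ 2 := by nlinarith
      omega
    · exact h
  set a : Fˣ := g ^ c with ha
  have hoa : orderOf a = m := by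
    rw [ha, orderOf_pow, hog, hcm, Nat.gcd_eq_right ⟨m, Nat.mul_comm m c⟩,
      Nat.mul_div_cancel _ hc0]
  refine ⟨(a : F), ?_, ?_, ?_⟩
  · intro h
    have : a = 1 := Units.ext (by simpa using h)
    rw [this, orderOf_one] at hoa; omega
  · have : a ^ m = 1 := by rw [← hoa]; exact pow_orderOf_eq_one a
    calc (a : F) ^ m = ((a ^ m : Fˣ) : F) := by rw [← Units.val_pow_eq_pow_val]
      _ = 1 := by rw [this]; rfl
  · have : a ^ (Q - 1) = 1 := orderOf_dvd_iff_pow_eq_one.1 (hoa ▸ hmd)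
    calc (a : F) ^ (Q - 1) = ((a ^ (Q - 1) : Fˣ) : F) := by rw [← Units.val_pow_eq_pow_val]
      _ = 1 := by rw [this]; rfl

section
variable (Q : ℕ) (F : Type*) [Field F] [Fintype F]

lemma aux_main (hQ2 : 2 ≤ Q)
    (hcard : Fintype.card F = Q ^ 2)
    (hadd : ∀ a b : F, (a + b) ^ Q = a ^ Q + b ^ Q)
    (n k : ℕ) (hn : 0 < n) (β δ : F) (hβ : β ^ (Q + 1) = 1) (hδ : δ ^ Q ≠ δ) :
    Function.Bijective (fun x : F => x ^ (n + k * (Q + 1)) *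
        ((δ * x ^ (Q - 1) - β * δ ^ Q) ^ n - δ * (x ^ (Q - 1) - β) ^ n)) ↔
      Nat.gcd (n * (n + 2 * k)) (Q - 1) = 1 := by
  have hQ0 : Q ≠ 0 := by omega
  have hsub : ∀ a b : F, (a - b) ^ Q = a ^ Q - b ^ Q := by
    intro a b
    have h := hadd (a - b) b
    rw [sub_add_cancel] at h
    linear_combination -h
  have hcardQ : ∀ x : F, (x ^ Q) ^ Q = x := by
    intro x
    rw [← pow_mul, show Q * Q = Fintype.card F by rw [hcard]; ring, FiniteField.pow_card]
  have hβ0 : β ≠ 0 := by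
    intro h; rw [h, zero_pow (by omega : Q + 1 ≠ 0)] at hβ; exact one_ne_zero hβ.symm
  have hβQ : β ^ Q * β = 1 := by rw [← pow_succ]; exact hβ
  have hβQinv : β ^ Q = β⁻¹ := by
    field_simp
    exact hβQ
  have hδ0 : δ ≠ 0 := fun h => hδ (by rw [h, zero_pow hQ0])
  have hδ1 : δ ≠ 1 := fun h => hδ (by rw [h, one_pow])
  have hd0 : δ - δ ^ Q ≠ 0 := sub_ne_zero.2 (Ne.symm hδ)
  have hdQ : (δ - δ ^ Q) ^ Q = -(δ - δ ^ Q) := by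
    rw [hsub, hcardQ]; ring
  have hnegQ : (-1 : F) ^ Q = -1 := by
    have h := hsub 0 1
    rwa [zero_sub, zero_pow hQ0, one_pow, zero_sub] at h
  -- the subfield predicate
  have hK1 : (1 : F) ^ Q = 1 := one_pow Q
  have hKmul : ∀ a b : F, a ^ Q = a → b ^ Q = b → (a * b) ^ Q = a * b := by
    intro a b ha hb; rw [mul_pow, ha, hb]
  have hKpow : ∀ (a : F) (m : ℕ), a ^ Q = a → (a ^ m) ^ Q = a ^ m := by
    intro a m ha; rw [← pow_mul, mul_comm, pow_mul, ha]
  have hKinv : ∀ a : F, a ^ Q = a → (a⁻¹) ^ Q = a⁻¹ := by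
    intro a ha; rw [inv_pow, ha]
  have hKone : ∀ a : F, a ^ Q = a → a ≠ 0 → a ^ (Q - 1) = 1 := by
    intro a ha h0
    have h : a ^ (Q - 1) * a = 1 * a := by
      rw [← pow_succ, Nat.sub_add_cancel (by omega), ha, one_mul]
    exact mul_right_cancel₀ h0 h
  have hKof : ∀ a : F, a ^ (Q - 1) = 1 → a ^ Q = a ∧ a ≠ 0 := by
    intro a ha
    have h0 : a ≠ 0 := by
      intro h; rw [h, zero_pow (by omega : Q - 1 ≠ 0)] at ha; exact one_ne_zero ha.symm
    refine ⟨?_, h0⟩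
    calc a ^ Q = a ^ (Q - 1) * a := by rw [← pow_succ, Nat.sub_add_cancel (by omega)]
      _ = a := by rw [ha, one_mul]
  -- independence of 1, δ over K
  have hindep : ∀ u v u' v' : F, u ^ Q = u → v ^ Q = v → u' ^ Q = u' → v' ^ Q = v' →
      u - δ * v = u' - δ * v' → u = u' ∧ v = v' := by
    intro u v u' v' hu hv hu' hv' h
    by_cases hvv : v = v'
    · subst hvv
      exact ⟨by linear_combination h, rfl⟩
    · exfalso
      have hvv0 : v - v' ≠ 0 := sub_ne_zero.2 hvv
      have hδeq : δ = (u - u') / (v - v') := by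
        rw [eq_div_iff hvv0]
        linear_combination -h
      exact hδ (by rw [hδeq, div_pow, hsub u u', hsub v v', hu, hv, hu', hv'])
  -- ε
  have hceq : (-β⁻¹ : F) ^ (Q + 1) = 1 := by
    have h1 : (-β⁻¹ : F) = (-1) * β⁻¹ := by ring
    rw [h1, mul_pow, inv_pow, hβ, inv_one, mul_one, pow_succ, hnegQ]
    norm_num
  obtain ⟨ε, hε0, hεpow⟩ := exists_eps Q hQ2 F hcard (-β⁻¹) (by simp [hβ0]) hceq
  have hεQ : ε ^ Q = -β⁻¹ * ε := by
    conv_lhs => rw [show Q = (Q - 1) + 1 by omega, pow_succ, hεpow]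
  have hβd0 : β * (δ - δ ^ Q) ≠ 0 := mul_ne_zero hβ0 hd0
  -- NN facts
  have hNK : ∀ s t : F, s ^ Q = s → t ^ Q = t →
      ((t - δ * s) * (t - δ ^ Q * s)) ^ Q = (t - δ * s) * (t - δ ^ Q * s) := by
    intro s t hs ht
    rw [mul_pow, hsub, hsub, mul_pow, mul_pow, hs, ht, hcardQ δ]
    ring
  have hN0 : ∀ s t : F, s ^ Q = s → t ^ Q = t → ¬(s = 0 ∧ t = 0) →
      (t - δ * s) * (t - δ ^ Q * s) ≠ 0 := by
    intro s t hs ht hst h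
    by_cases hs0 : s = 0
    · subst hs0
      have ht0 : t ≠ 0 := fun h' => hst ⟨rfl, h'⟩
      rcases mul_eq_zero.1 h with h1 | h1 <;>
        · rw [mul_zero, sub_zero] at h1; exact ht0 h1
    · rcases mul_eq_zero.1 h with h1 | h1
      · have hδeq : δ = t / s := by
          rw [eq_div_iff hs0]; linear_combination -h1
        exact hδ (by rw [hδeq, div_pow, hs, ht])
      · have hδeq : δ ^ Q = t / s := by
          rw [eq_div_iff hs0]; linear_combination -h1
        apply hδ
        calc δ ^ Q = t / s := hδeq
          _ = (t / s) ^ Q := by rw [div_pow, hs, ht]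
          _ = (δ ^ Q) ^ Q := by rw [hδeq]
          _ = δ := hcardQ δ
  -- Frobenius of Φ
  have hΦQ : ∀ s t : F, s ^ Q = s → t ^ Q = t →
      (ε * (t - δ * s) * (β * (δ - δ ^ Q))⁻¹) ^ Q = ε * (t - δ ^ Q * s) * (δ - δ ^ Q)⁻¹ := by
    intro s t hs ht
    rw [mul_pow, mul_pow, inv_pow, mul_pow β _ Q, hsub t (δ * s), mul_pow δ s Q, hs, ht, hεQ, hdQ,
      hβQinv, mul_inv, inv_inv, inv_neg]
    field_simp [hβ0]
  -- values of f on the parametrization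
  have hΦval : ∀ s t : F, s ^ Q = s → t ^ Q = t →
      (fun x : F => x ^ (n + k * (Q + 1)) *
        ((δ * x ^ (Q - 1) - β * δ ^ Q) ^ n - δ * (x ^ (Q - 1) - β) ^ n))
        (ε * (t - δ * s) * (β * (δ - δ ^ Q))⁻¹) =
      ((ε ^ 2 * (β * (δ - δ ^ Q) ^ 2)⁻¹) ^ k * ε ^ n) *
        ((t - δ * s) * (t - δ ^ Q * s)) ^ k * (t ^ n - δ * s ^ n) := by
    intro s t hs ht
    simp only []
    obtain ⟨x, hxdef⟩ : ∃ x : F, x = ε * (t - δ * s) * (β * (δ - δ ^ Q))⁻¹ := ⟨_, rfl⟩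
    rw [← hxdef]
    have hx1 : x * x ^ (Q - 1) = x ^ Q := by
      conv_rhs => rw [show Q = (Q - 1) + 1 by omega, pow_succ]
      ring
    have hxQ : x ^ Q = ε * (t - δ ^ Q * s) * (δ - δ ^ Q)⁻¹ := by
      rw [hxdef]; exact hΦQ s t hs ht
    have hT : δ * x ^ Q - β * δ ^ Q * x = ε * t := by
      rw [hxQ, hxdef]
      field_simp [hβ0, hd0]
      ring
    have hS : x ^ Q - β * x = ε * s := by
      rw [hxQ, hxdef]
      field_simp [hβ0, hd0]
      ring
    have hNorm : x ^ Q * x = (ε ^ 2 * (β * (δ - δ ^ Q) ^ 2)⁻¹) *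
        ((t - δ * s) * (t - δ ^ Q * s)) := by
      rw [hxQ, hxdef]
      field_simp [hβ0, hd0]
    have e1 : δ * x ^ Q - β * δ ^ Q * x = x * (δ * x ^ (Q - 1) - β * δ ^ Q) := by
      linear_combination -δ * hx1
    have e2 : x ^ Q - β * x = x * (x ^ (Q - 1) - β) := by
      linear_combination -hx1
    have hxx : x ^ (n + k * (Q + 1)) = x ^ n * (x ^ Q * x) ^ k := by
      rw [pow_add, show k * (Q + 1) = (Q + 1) * k from Nat.mul_comm _ _, pow_mul, pow_succ]
    have step1 : x ^ (n + k * (Q + 1)) *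
        ((δ * x ^ (Q - 1) - β * δ ^ Q) ^ n - δ * (x ^ (Q - 1) - β) ^ n) =
        (x ^ Q * x) ^ k * ((δ * x ^ Q - β * δ ^ Q * x) ^ n - δ * (x ^ Q - β * x) ^ n) := by
      rw [e1, e2, mul_pow x, mul_pow x, hxx]
      ring
    rw [step1, hT, hS, hNorm,
      mul_pow (ε ^ 2 * (β * (δ - δ ^ Q) ^ 2)⁻¹) ((t - δ * s) * (t - δ ^ Q * s)) k,
      mul_pow ε t n, mul_pow ε s n]
    ring
  -- surjectivity of the parametrization
  have hΦsur : ∀ x : F, ∃ s t : F, s ^ Q = s ∧ t ^ Q = t ∧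
      ε * (t - δ * s) * (β * (δ - δ ^ Q))⁻¹ = x := by
    intro x
    obtain ⟨w, hwdef⟩ : ∃ w : F, w = β * (δ - δ ^ Q) * x * ε⁻¹ := ⟨_, rfl⟩
    obtain ⟨s, hsdef⟩ : ∃ s : F, s = (w ^ Q - w) * (δ - δ ^ Q)⁻¹ := ⟨_, rfl⟩
    have hsQ : s ^ Q = s := by
      rw [hsdef, mul_pow, hsub, hcardQ w, inv_pow, hdQ, inv_neg]
      ring
    have h5 : s * (δ - δ ^ Q) = w ^ Q - w := by
      rw [hsdef]
      field_simp [hd0]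
    have htQ : (w + δ * s) ^ Q = w + δ * s := by
      rw [hadd, mul_pow, hsQ]
      linear_combination -h5
    refine ⟨s, w + δ * s, hsQ, htQ, ?_⟩
    rw [hwdef]
    field_simp [hβ0, hd0, hε0]
    ring
  -- injectivity of the parametrization
  have hΦinj : ∀ s t s' t' : F, s ^ Q = s → t ^ Q = t → s' ^ Q = s' → t' ^ Q = t' →
      ε * (t - δ * s) * (β * (δ - δ ^ Q))⁻¹ = ε * (t' - δ * s') * (β * (δ - δ ^ Q))⁻¹ →
      s = s' ∧ t = t' := by
    intro s t s' t' hs ht hs' ht' h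
    have h2 : t - δ * s = t' - δ * s' := by
      have h3 := mul_right_cancel₀ (inv_ne_zero hβd0) h
      exact mul_left_cancel₀ hε0 h3
    obtain ⟨h4, h5⟩ := hindep t s t' s' ht hs ht' hs' h2
    exact ⟨h5, h4⟩
  -- power map injectivity on K
  have hpow0 : ∀ m : ℕ, 0 < m → Nat.gcd m (Q - 1) = 1 → ∀ a b : F,
      a ^ Q = a → b ^ Q = b → a ^ m = b ^ m → a = b := by
    intro m hm hgcd a b ha hb hab
    by_cases ha0 : a = 0
    · subst ha0
      rw [zero_pow hm.ne'] at hab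
      exact (pow_eq_zero_iff hm.ne').1 hab.symm |>.symm
    · have hb0 : b ≠ 0 := by
        intro h; rw [h, zero_pow hm.ne'] at hab
        exact ha0 ((pow_eq_zero_iff hm.ne').1 hab)
      have hc1 : (a * b⁻¹) ^ m = 1 := by
        rw [mul_pow, inv_pow, hab, mul_inv_cancel₀ (pow_ne_zero m hb0)]
      have hcQ : (a * b⁻¹) ^ (Q - 1) = 1 :=
        hKone _ (hKmul a b⁻¹ ha (hKinv b hb)) (mul_ne_zero ha0 (inv_ne_zero hb0))
      have hord : orderOf (a * b⁻¹) ∣ Nat.gcd m (Q - 1) :=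
        Nat.dvd_gcd (orderOf_dvd_of_pow_eq_one hc1) (orderOf_dvd_of_pow_eq_one hcQ)
      rw [hgcd, Nat.dvd_one] at hord
      have hone : a * b⁻¹ = 1 := orderOf_eq_one_iff.1 hord
      field_simp at hone
      exact hone

  have hC0 : ((ε ^ 2 * (β * (δ - δ ^ Q) ^ 2)⁻¹) ^ k * ε ^ n : F) ≠ 0 :=
    mul_ne_zero (pow_ne_zero _ (mul_ne_zero (pow_ne_zero _ hε0)
      (inv_ne_zero (mul_ne_zero hβ0 (pow_ne_zero _ hd0))))) (pow_ne_zero _ hε0)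
  constructor
  · -- bijective → gcd = 1
    intro hbij
    by_contra hgcd
    have hinj := hbij.injective
    have hsplit : ¬(Nat.Coprime n (Q - 1) ∧ Nat.Coprime (n + 2 * k) (Q - 1)) :=
      fun h => hgcd (Nat.coprime_mul_iff_left.mpr h)
    rcases not_and_or.1 hsplit with hcse | hcse
    · -- gcd n (Q-1) > 1 : pigeonhole on two lines
      classical
      have hne1 : Nat.gcd n (Q - 1) ≠ 1 := hcse
      have hne0 : Nat.gcd n (Q - 1) ≠ 0 := fun h => (by omega : Q - 1 ≠ 0)
        (Nat.eq_zero_of_gcd_eq_zero_right h)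
      have hm2 : 2 ≤ Nat.gcd n (Q - 1) := by omega
      obtain ⟨a, ha1, ham, haQ1⟩ := exists_root Q hQ2 F hcard _ hm2 (Nat.gcd_dvd_right _ _)
      obtain ⟨haK, ha0⟩ := hKof a haQ1
      have han : a ^ n = 1 := by
        obtain ⟨c, hcdef⟩ := Nat.gcd_dvd_left n (Q - 1)
        rw [hcdef, pow_mul, ham, one_pow]
      obtain ⟨Ks, hKs⟩ : ∃ Ks : Finset F, Ks = Finset.univ.filter (fun z => z ^ (Q - 1) = 1) :=
        ⟨_, rfl⟩
      have hKsmem : ∀ z : F, z ∈ Ks ↔ z ^ (Q - 1) = 1 := by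
        intro z; rw [hKs]; simp
      have h1Ks : (1 : F) ∈ Ks := (hKsmem 1).2 (one_pow _)
      obtain ⟨A, hA⟩ : ∃ A : Finset F,
          A = Ks.image (fun z => ε * (z * a - δ * z) * (β * (δ - δ ^ Q))⁻¹) := ⟨_, rfl⟩
      obtain ⟨B, hB⟩ : ∃ B : Finset F,
          B = Ks.image (fun z => ε * (z - δ * z) * (β * (δ - δ ^ Q))⁻¹) := ⟨_, rfl⟩
      obtain ⟨C, hC⟩ : ∃ C : Finset F,
          C = Ks.image (fun z =>
            ((ε ^ 2 * (β * (δ - δ ^ Q) ^ 2)⁻¹) ^ k * ε ^ n) * (1 - δ) * z) := ⟨_, rfl⟩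
      have hAcard : A.card = Ks.card := by
        rw [hA]
        apply Finset.card_image_of_injOn
        intro z hz z' hz' h
        obtain ⟨hzK, hz0⟩ := hKof z ((hKsmem z).1 hz)
        obtain ⟨hz'K, hz'0⟩ := hKof z' ((hKsmem z').1 hz')
        exact (hΦinj z (z * a) z' (z' * a) hzK (hKmul z a hzK haK) hz'K
          (hKmul z' a hz'K haK) h).1
      have hBcard : B.card = Ks.card := by
        rw [hB]
        apply Finset.card_image_of_injOn
        intro z hz z' hz' h
        obtain ⟨hzK, hz0⟩ := hKof z ((hKsmem z).1 hz)
        obtain ⟨hz'K, hz'0⟩ := hKof z' ((hKsmem z').1 hz')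
        exact (hΦinj z z z' z' hzK hzK hz'K hz'K h).1
      have hdisj : Disjoint A B := by
        rw [Finset.disjoint_left]
        intro y hyA hyB
        rw [hA, Finset.mem_image] at hyA
        rw [hB, Finset.mem_image] at hyB
        obtain ⟨z, hz, hzeq⟩ := hyA
        obtain ⟨z', hz', hz'eq⟩ := hyB
        obtain ⟨hzK, hz0⟩ := hKof z ((hKsmem z).1 hz)
        obtain ⟨hz'K, hz'0⟩ := hKof z' ((hKsmem z').1 hz')
        have heq2 : ε * (z * a - δ * z) * (β * (δ - δ ^ Q))⁻¹ =
            ε * (z' - δ * z') * (β * (δ - δ ^ Q))⁻¹ := by rw [hzeq, ← hz'eq]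
        obtain ⟨h1, h2⟩ := hΦinj z (z * a) z' z' hzK (hKmul z a hzK haK) hz'K hz'K heq2
        apply ha1
        have : z * a = z := by rw [h2, ← h1]
        field_simp at this
        tauto
      have hmaps : ∀ y ∈ A ∪ B, (fun x : F => x ^ (n + k * (Q + 1)) *
          ((δ * x ^ (Q - 1) - β * δ ^ Q) ^ n - δ * (x ^ (Q - 1) - β) ^ n)) y ∈ C := by
        intro y hy
        rcases Finset.mem_union.1 hy with hy | hy
        · rw [hA, Finset.mem_image] at hy
          obtain ⟨z, hz, rfl⟩ := hy
          obtain ⟨hzK, hz0⟩ := hKof z ((hKsmem z).1 hz)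
          rw [hΦval z (z * a) hzK (hKmul z a hzK haK)]
          have hval : ((ε ^ 2 * (β * (δ - δ ^ Q) ^ 2)⁻¹) ^ k * ε ^ n) *
              ((z * a - δ * z) * (z * a - δ ^ Q * z)) ^ k * ((z * a) ^ n - δ * z ^ n) =
              ((ε ^ 2 * (β * (δ - δ ^ Q) ^ 2)⁻¹) ^ k * ε ^ n) * (1 - δ) *
              (((a - δ * 1) * (a - δ ^ Q * 1)) ^ k * z ^ (n + 2 * k)) := by
            have hb : (z * a - δ * z) * (z * a - δ ^ Q * z) =
                z ^ 2 * ((a - δ * 1) * (a - δ ^ Q * 1)) := by ring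
            rw [hb, mul_pow (z ^ 2) ((a - δ * 1) * (a - δ ^ Q * 1)) k, mul_pow z a n, han]
            ring
          rw [hval]
          rw [hC, Finset.mem_image]
          refine ⟨((a - δ * 1) * (a - δ ^ Q * 1)) ^ k * z ^ (n + 2 * k), ?_, rfl⟩
          apply (hKsmem _).2
          apply hKone
          · exact hKmul _ _ (hKpow _ k (hNK 1 a hK1 haK)) (hKpow _ (n + 2 * k) hzK)
          · exact mul_ne_zero (pow_ne_zero _ (hN0 1 a hK1 haK (fun h => one_ne_zero h.1)))
              (pow_ne_zero _ hz0)
        · rw [hB, Finset.mem_image] at hy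
          obtain ⟨z, hz, rfl⟩ := hy
          obtain ⟨hzK, hz0⟩ := hKof z ((hKsmem z).1 hz)
          rw [hΦval z z hzK hzK]
          have hval : ((ε ^ 2 * (β * (δ - δ ^ Q) ^ 2)⁻¹) ^ k * ε ^ n) *
              ((z - δ * z) * (z - δ ^ Q * z)) ^ k * (z ^ n - δ * z ^ n) =
              ((ε ^ 2 * (β * (δ - δ ^ Q) ^ 2)⁻¹) ^ k * ε ^ n) * (1 - δ) *
              (((1 - δ * 1) * (1 - δ ^ Q * 1)) ^ k * z ^ (n + 2 * k)) := by
            have hb : (z - δ * z) * (z - δ ^ Q * z) =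
                z ^ 2 * ((1 - δ * 1) * (1 - δ ^ Q * 1)) := by ring
            rw [hb, mul_pow (z ^ 2) ((1 - δ * 1) * (1 - δ ^ Q * 1)) k]
            ring
          rw [hval]
          rw [hC, Finset.mem_image]
          refine ⟨((1 - δ * 1) * (1 - δ ^ Q * 1)) ^ k * z ^ (n + 2 * k), ?_, rfl⟩
          apply (hKsmem _).2
          apply hKone
          · exact hKmul _ _ (hKpow _ k (hNK 1 1 hK1 hK1)) (hKpow _ (n + 2 * k) hzK)
          · exact mul_ne_zero (pow_ne_zero _ (hN0 1 1 hK1 hK1 (fun h => one_ne_zero h.1)))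
              (pow_ne_zero _ hz0)
      have hlt : C.card < (A ∪ B).card := by
        have h1 : C.card ≤ Ks.card := by rw [hC]; exact Finset.card_image_le
        have h2 : (A ∪ B).card = A.card + B.card := Finset.card_union_of_disjoint hdisj
        have h3 : 0 < Ks.card := Finset.card_pos.2 ⟨1, h1Ks⟩
        omega
      obtain ⟨y, hy, y', hy', hne, heq⟩ :=
        Finset.exists_ne_map_eq_of_card_lt_of_maps_to hlt hmaps
      exact hne (hinj heq)
    · -- gcd (n+2k) (Q-1) > 1 : explicit collision
      have hne1 : Nat.gcd (n + 2 * k) (Q - 1) ≠ 1 := hcse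
      have hne0 : Nat.gcd (n + 2 * k) (Q - 1) ≠ 0 := fun h => (by omega : Q - 1 ≠ 0)
        (Nat.eq_zero_of_gcd_eq_zero_right h)
      have hm2 : 2 ≤ Nat.gcd (n + 2 * k) (Q - 1) := by omega
      obtain ⟨a, ha1, ham, haQ1⟩ := exists_root Q hQ2 F hcard _ hm2 (Nat.gcd_dvd_right _ _)
      obtain ⟨haK, ha0⟩ := hKof a haQ1
      have ha2k : a ^ (n + 2 * k) = 1 := by
        obtain ⟨c, hcdef⟩ := Nat.gcd_dvd_left (n + 2 * k) (Q - 1)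
        rw [hcdef, pow_mul, ham, one_pow]
      have hvals : (fun x : F => x ^ (n + k * (Q + 1)) *
          ((δ * x ^ (Q - 1) - β * δ ^ Q) ^ n - δ * (x ^ (Q - 1) - β) ^ n))
            (ε * (a - δ * a) * (β * (δ - δ ^ Q))⁻¹) =
          (fun x : F => x ^ (n + k * (Q + 1)) *
          ((δ * x ^ (Q - 1) - β * δ ^ Q) ^ n - δ * (x ^ (Q - 1) - β) ^ n))
            (ε * (1 - δ * 1) * (β * (δ - δ ^ Q))⁻¹) := by
        rw [hΦval a a haK haK, hΦval 1 1 hK1 hK1]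
        have hb : (a - δ * a) * (a - δ ^ Q * a) =
            a ^ 2 * ((1 - δ * 1) * (1 - δ ^ Q * 1)) := by ring
        rw [hb, mul_pow (a ^ 2) ((1 - δ * 1) * (1 - δ ^ Q * 1)) k]
        have h8 : (a ^ 2) ^ k * (a ^ n - δ * a ^ n) = 1 - δ := by
          have h7 : (a ^ 2) ^ k * (a ^ n - δ * a ^ n) = (1 - δ) * a ^ (n + 2 * k) := by ring
          rw [h7, ha2k, mul_one]
        linear_combination ((ε ^ 2 * (β * (δ - δ ^ Q) ^ 2)⁻¹) ^ k * ε ^ n) *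
          ((1 - δ * 1) * (1 - δ ^ Q * 1)) ^ k * h8
      have heq := hinj hvals
      obtain ⟨h1, _⟩ := hΦinj a a 1 1 haK haK hK1 hK1 heq
      exact ha1 h1
  · -- gcd = 1 → bijective
    intro hgcd
    obtain ⟨hg1, hg2⟩ := Nat.coprime_mul_iff_left.mp hgcd
    apply Finite.injective_iff_bijective.1
    intro x x' hxx
    obtain ⟨s, t, hs, ht, rfl⟩ := hΦsur x
    obtain ⟨s', t', hs', ht', rfl⟩ := hΦsur x'
    rw [hΦval s t hs ht, hΦval s' t' hs' ht'] at hxx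
    have h2 : ((t - δ * s) * (t - δ ^ Q * s)) ^ k * (t ^ n - δ * s ^ n) =
        ((t' - δ * s') * (t' - δ ^ Q * s')) ^ k * (t' ^ n - δ * s' ^ n) := by
      apply mul_left_cancel₀ hC0
      linear_combination hxx
    have key : ((t - δ * s) * (t - δ ^ Q * s)) ^ k * t ^ n -
        δ * (((t - δ * s) * (t - δ ^ Q * s)) ^ k * s ^ n) =
        ((t' - δ * s') * (t' - δ ^ Q * s')) ^ k * t' ^ n -
        δ * (((t' - δ * s') * (t' - δ ^ Q * s')) ^ k * s' ^ n) := by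
      linear_combination h2
    obtain ⟨hTT, hSS⟩ := hindep _ _ _ _
      (hKmul _ _ (hKpow _ k (hNK s t hs ht)) (hKpow _ n ht))
      (hKmul _ _ (hKpow _ k (hNK s t hs ht)) (hKpow _ n hs))
      (hKmul _ _ (hKpow _ k (hNK s' t' hs' ht')) (hKpow _ n ht'))
      (hKmul _ _ (hKpow _ k (hNK s' t' hs' ht')) (hKpow _ n hs')) key
    suffices hfin : s = s' ∧ t = t' by rw [hfin.1, hfin.2]
    by_cases hz : s = 0 ∧ t = 0
    · obtain ⟨rfl, rfl⟩ := hz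
      by_contra hco
      have hz' : ¬(s' = 0 ∧ t' = 0) := by
        rintro ⟨rfl, rfl⟩
        exact hco ⟨rfl, rfl⟩
      have hN' := hN0 s' t' hs' ht' hz'
      rw [zero_pow hn.ne'] at hTT hSS
      have hs'0 : s' = 0 := by
        have h3 : ((t' - δ * s') * (t' - δ ^ Q * s')) ^ k * s' ^ n = 0 := by
          rw [← hSS]; ring
        rcases mul_eq_zero.1 h3 with h | h
        · exact absurd h (pow_ne_zero k hN')
        · exact pow_eq_zero_iff hn.ne' |>.1 h
      have ht'0 : t' = 0 := by
        have h3 : ((t' - δ * s') * (t' - δ ^ Q * s')) ^ k * t' ^ n = 0 := by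
          rw [← hTT]; ring
        rcases mul_eq_zero.1 h3 with h | h
        · exact absurd h (pow_ne_zero k hN')
        · exact pow_eq_zero_iff hn.ne' |>.1 h
      exact hz' ⟨hs'0, ht'0⟩
    · have hz' : ¬(s' = 0 ∧ t' = 0) := by
        rintro ⟨rfl, rfl⟩
        have hN := hN0 s t hs ht hz
        rw [zero_pow hn.ne'] at hTT hSS
        apply hz
        constructor
        · have h3 : ((t - δ * s) * (t - δ ^ Q * s)) ^ k * s ^ n = 0 := by rw [hSS]; ring
          rcases mul_eq_zero.1 h3 with h | h
          · exact absurd h (pow_ne_zero k hN)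
          · exact pow_eq_zero_iff hn.ne' |>.1 h
        · have h3 : ((t - δ * s) * (t - δ ^ Q * s)) ^ k * t ^ n = 0 := by rw [hTT]; ring
          rcases mul_eq_zero.1 h3 with h | h
          · exact absurd h (pow_ne_zero k hN)
          · exact pow_eq_zero_iff hn.ne' |>.1 h
      have hN := hN0 s t hs ht hz
      have hN' := hN0 s' t' hs' ht' hz'
      by_cases hs0 : s = 0
      · subst hs0
        have ht0 : t ≠ 0 := fun h => hz ⟨rfl, h⟩
        have hs'0 : s' = 0 := by
          have h3 : ((t' - δ * s') * (t' - δ ^ Q * s')) ^ k * s' ^ n = 0 := by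
            rw [← hSS, zero_pow hn.ne', mul_zero]
          rcases mul_eq_zero.1 h3 with h | h
          · exact absurd h (pow_ne_zero k hN')
          · exact pow_eq_zero_iff hn.ne' |>.1 h
        subst hs'0
        refine ⟨rfl, ?_⟩
        have ht'0 : t' ≠ 0 := fun h => hz' ⟨rfl, h⟩
        apply hpow0 (n + 2 * k) (by omega) hg2 t t' ht ht'
        have e : ∀ u : F, ((u - δ * 0) * (u - δ ^ Q * 0)) ^ k * u ^ n = u ^ (n + 2 * k) := by
          intro u; ring
        rw [e t, e t'] at hTT
        exact hTT
      · have hs'0 : s' ≠ 0 := by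
          intro h
          apply hs0
          have h3 : ((t - δ * s) * (t - δ ^ Q * s)) ^ k * s ^ n = 0 := by
            rw [hSS, h, zero_pow hn.ne', mul_zero]
          rcases mul_eq_zero.1 h3 with h4 | h4
          · exact absurd h4 (pow_ne_zero k hN)
          · exact pow_eq_zero_iff hn.ne' |>.1 h4
        have hcross : t ^ n * s' ^ n = t' ^ n * s ^ n := by
          have hmm : (((t - δ * s) * (t - δ ^ Q * s)) ^ k * t ^ n) *
              (((t' - δ * s') * (t' - δ ^ Q * s')) ^ k * s' ^ n) =
              (((t' - δ * s') * (t' - δ ^ Q * s')) ^ k * t' ^ n) *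
              (((t - δ * s) * (t - δ ^ Q * s)) ^ k * s ^ n) := by
            rw [hTT, hSS]
          apply mul_left_cancel₀ (mul_ne_zero (pow_ne_zero k hN) (pow_ne_zero k hN'))
          linear_combination hmm
        have hr : t * s⁻¹ = t' * s'⁻¹ := by
          apply hpow0 n hn hg1 _ _ (hKmul _ _ ht (hKinv _ hs)) (hKmul _ _ ht' (hKinv _ hs'))
          rw [mul_pow, mul_pow, inv_pow, inv_pow]
          field_simp [pow_ne_zero n hs0, pow_ne_zero n hs'0]
          linear_combination hcross
        obtain ⟨μ, hμdef⟩ : ∃ μ : F, μ = s' * s⁻¹ := ⟨_, rfl⟩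
        have hμ0 : μ ≠ 0 := by rw [hμdef]; exact mul_ne_zero hs'0 (inv_ne_zero hs0)
        have hμK : μ ^ Q = μ := by rw [hμdef]; exact hKmul _ _ hs' (hKinv _ hs)
        have hs'eq : s' = μ * s := by rw [hμdef]; field_simp
        have ht'eq : t' = μ * t := by
          have h4 : t' = (t * s⁻¹) * s' := by
            rw [hr]; field_simp
          rw [h4, hμdef]; ring
        have hμpow : μ ^ (n + 2 * k) = 1 := by
          rw [hs'eq, ht'eq] at hSS
          have hNN' : (μ * t - δ * (μ * s)) * (μ * t - δ ^ Q * (μ * s)) =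
              μ ^ 2 * ((t - δ * s) * (t - δ ^ Q * s)) := by ring
          rw [hNN', mul_pow (μ ^ 2), mul_pow μ s n] at hSS
          have h9 : μ ^ (n + 2 * k) * (((t - δ * s) * (t - δ ^ Q * s)) ^ k * s ^ n) =
              1 * (((t - δ * s) * (t - δ ^ Q * s)) ^ k * s ^ n) := by
            linear_combination -hSS
          have h10 := mul_right_cancel₀
            (mul_ne_zero (pow_ne_zero k hN) (pow_ne_zero n hs0)) h9
          exact h10
        have hμ1 : μ = 1 := hpow0 (n + 2 * k) (by omega) hg2 μ 1 hμK hK1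
          (by rw [hμpow, one_pow])
        have hseq : s' = s := by rw [hs'eq, hμ1, one_mul]
        have hteq : t' = t := by rw [ht'eq, hμ1, one_mul]
        exact ⟨hseq.symm, hteq.symm⟩

end

theorem stmt_6 (p e Q : ℕ) (hp : p.Prime) (he : 0 < e) (hQ : Q = p ^ e)
    (F : Type*) [Field F] [Fintype F] (hF : Fintype.card F = Q ^ 2)
    (n k : ℕ) (hn : 0 < n)
    (β δ : F) (hβ : β ^ (Q + 1) = 1) (hδ : δ ^ Q ≠ δ) :
    Function.Bijective (fun x : F => x ^ (n + k * (Q + 1)) *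
        ((δ * x ^ (Q - 1) - β * δ ^ Q) ^ n - δ * (x ^ (Q - 1) - β) ^ n)) ↔
      Nat.gcd (n * (n + 2 * k)) (Q - 1) = 1 := by
  have hQ2 : 2 ≤ Q := by
    rw [hQ]
    calc 2 = 2 ^ 1 := rfl
      _ ≤ p ^ 1 := Nat.pow_le_pow_left hp.two_le 1
      _ ≤ p ^ e := Nat.pow_le_pow_right hp.pos he
  -- characteristic
  have hchar : CharP F p := by
    obtain ⟨q, hqi⟩ := CharP.exists F
    haveI := hqi
    have hq : q.Prime := CharP.char_is_prime F q
    haveI := Fact.mk hq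
    obtain ⟨m, hq2, hm⟩ := FiniteField.card F q
    have hpq : p = q := by
      have h1 : p ∣ q ^ (m : ℕ) := by
        rw [← hm, hF, hQ, ← pow_mul]
        exact dvd_pow_self p (by positivity)
      exact (Nat.prime_dvd_prime_iff_eq hp hq).1 (hp.dvd_of_dvd_pow h1)
    rwa [hpq]
  haveI := hchar
  haveI := Fact.mk hp
  have hadd : ∀ a b : F, (a + b) ^ Q = a ^ Q + b ^ Q := by
    intro a b
    rw [hQ]
    exact add_pow_char_pow a b p e
  exact aux_main Q F hQ2 hF hadd n k hn β δ hβ hδ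
end

section
/- Let Q be a prime power, β, γ ∈ F_{Q^2} with β^{Q+1} = 1 and γ^{Q+1} ≠ 1, and n a positive integer. Then the polynomial h(x) := (γx - β)^n - γ(x - γ^Q β)^n has no roots in μ_{Q+1} = {x ∈ F_{Q^2} : x^{Q+1} = 1}. -/
theorem stmt_7 (p e Q : ℕ) (hp : p.Prime) (he : 0 < e) (hQ : Q = p ^ e)
    (F : Type*) [Field F] [Fintype F] (hF : Fintype.card F = Q ^ 2)
    (n : ℕ) (hn : 0 < n)
    (β γ : F) (hβ : β ^ (Q + 1) = 1) (hγ : γ ^ (Q + 1) ≠ 1) :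
    ∀ α : F, α ^ (Q + 1) = 1 →
      (γ * α - β) ^ n - γ * (α - γ ^ Q * β) ^ n ≠ 0 := by
  intro α hα habs
  have hβ0 : β ≠ 0 := fun h => by simp [h] at hβ
  have hα0 : α ≠ 0 := fun h => by simp [h] at hα
  -- characteristic of F is p
  haveI hpf : Fact p.Prime := ⟨hp⟩
  haveI hchar : CharP F p := by
    cases CharP.exists F with
    | intro q hq =>
      haveI := hq
      have hq' : q.Prime := CharP.char_is_prime F q
      obtain ⟨m, -, hcard⟩ := FiniteField.card F q
      have hdvd : q ∣ p ^ (e * 2) := by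
        rw [pow_mul, ← hQ, ← hF, hcard]
        exact dvd_pow_self q m.2.ne'
      have hqp : q = p :=
        (Nat.prime_dvd_prime_iff_eq hq' hp).mp (hq'.dvd_of_dvd_pow hdvd)
      rwa [hqp] at hq
  -- γ^{Q^2} = γ
  have hγQQ : (γ ^ Q) ^ Q = γ := by
    rw [← pow_mul, ← sq, ← hF, FiniteField.pow_card]
  -- denominator nonzero
  have hden : α - γ ^ Q * β ≠ 0 := by
    intro h
    apply hγ
    have hαe : α = γ ^ Q * β := sub_eq_zero.mp h
    have h1 : (γ ^ Q * β) ^ (Q + 1) = 1 := hαe ▸ hα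
    rw [mul_pow, hβ, mul_one] at h1
    calc γ ^ (Q + 1) = (γ ^ Q) ^ (Q + 1) := by
          rw [pow_succ, pow_succ, hγQQ, mul_comm]
      _ = 1 := h1
  have h : (γ * α - β) ^ n = γ * (α - γ ^ Q * β) ^ n := sub_eq_zero.mp habs
  have hαQ : α ^ Q * α = 1 := by rw [← pow_succ]; exact hα
  have hβQ : β ^ Q * β = 1 := by rw [← pow_succ]; exact hβ
  -- Frobenius computations
  have hAQ : (γ * α - β) ^ Q = γ ^ Q * α ^ Q - β ^ Q := by
    subst hQ; rw [sub_pow_char_pow, mul_pow]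
  have hBQ : (α - γ ^ Q * β) ^ Q = α ^ Q - γ * β ^ Q := by
    subst hQ; rw [sub_pow_char_pow, mul_pow, hγQQ]
  -- key identity
  have hkey : (γ * α - β) ^ (Q + 1) = (α - γ ^ Q * β) ^ (Q + 1) := by
    rw [pow_succ, pow_succ, hAQ, hBQ]
    linear_combination (γ ^ Q * γ - 1) * hαQ + (1 - γ ^ Q * γ) * hβQ
  -- conclude
  have hB : (α - γ ^ Q * β) ^ (n * (Q + 1)) ≠ 0 := pow_ne_zero _ hden
  apply hγ
  have h2 : (α - γ ^ Q * β) ^ (n * (Q + 1)) =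
      γ ^ (Q + 1) * (α - γ ^ Q * β) ^ (n * (Q + 1)) := by
    calc (α - γ ^ Q * β) ^ (n * (Q + 1))
        = ((α - γ ^ Q * β) ^ (Q + 1)) ^ n := by rw [Nat.mul_comm, pow_mul]
      _ = ((γ * α - β) ^ (Q + 1)) ^ n := by rw [hkey]
      _ = ((γ * α - β) ^ n) ^ (Q + 1) := by rw [← pow_mul, Nat.mul_comm, pow_mul]
      _ = (γ * (α - γ ^ Q * β) ^ n) ^ (Q + 1) := by rw [h]
      _ = γ ^ (Q + 1) * (α - γ ^ Q * β) ^ (n * (Q + 1)) := by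
          rw [mul_pow, ← pow_mul]
  have := mul_right_cancel₀ hB (by rw [← h2, one_mul] : (1 : F) * _ = γ ^ (Q + 1) * _)
  exact this.symm
end

section
/- Let Q be a prime power, β, δ ∈ F_{Q^2} with β^{Q+1} = 1 and δ ∉ F_Q, and n a positive integer. Then the polynomial h(x) := (δx - βδ^Q)^n - δ(x - β)^n has no roots in μ_{Q+1} = {x ∈ F_{Q^2} : x^{Q+1} = 1}. -/
theorem stmt_8 (p e Q : ℕ) (hp : p.Prime) (he : 0 < e) (hQ : Q = p ^ e)
    (F : Type*) [Field F] [Fintype F] (hF : Fintype.card F = Q ^ 2)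
    (n : ℕ) (hn : 0 < n)
    (β δ : F) (hβ : β ^ (Q + 1) = 1) (hδ : δ ^ Q ≠ δ) :
    ∀ α : F, α ^ (Q + 1) = 1 →
      (δ * α - β * δ ^ Q) ^ n - δ * (α - β) ^ n ≠ 0 := by
  -- establish characteristic p
  have hcard0 : ((Fintype.card F : ℕ) : F) = 0 := FiniteField.cast_card_eq_zero F
  set q := ringChar F with hq
  haveI : CharP F q := ringChar.charP F
  have hqprime : q.Prime := CharP.char_is_prime F q
  have hdvd : q ∣ Q ^ 2 := by
    rw [← hF]; exact (CharP.cast_eq_zero_iff F q _).mp hcard0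
  have hqp : q = p := by
    have : q ∣ p := hqprime.dvd_of_dvd_pow (by
      have : q ∣ (p ^ e) ^ 2 := hQ ▸ hdvd
      rw [← pow_mul] at this; exact this)
    exact (Nat.prime_dvd_prime_iff_eq hqprime hp).mp this
  haveI : CharP F p := hqp ▸ ringChar.charP F
  haveI : Fact p.Prime := ⟨hp⟩
  -- basic facts
  have hβ0 : β ≠ 0 := by
    intro h; rw [h, zero_pow (Nat.succ_ne_zero Q)] at hβ; exact zero_ne_one hβ
  have hδδ : δ - δ ^ Q ≠ 0 := sub_ne_zero.mpr (fun h => hδ h.symm)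
  intro α hα heq
  have hα0 : α ≠ 0 := by
    intro h; rw [h, zero_pow (Nat.succ_ne_zero Q)] at hα; exact zero_ne_one hα
  have heq' : (δ * α - β * δ ^ Q) ^ n = δ * (α - β) ^ n := by
    have := sub_eq_zero.mp heq; linear_combination this
  by_cases hab : α = β
  · subst hab
    rw [sub_self, zero_pow hn.ne', mul_zero] at heq'
    have h1 : δ * α - α * δ ^ Q = α * (δ - δ ^ Q) := by ring
    rw [h1] at heq'
    have h0 : α * (δ - δ ^ Q) = 0 := pow_eq_zero_iff hn.ne' |>.mp heq'
    rcases mul_eq_zero.mp h0 with h | h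
    exacts [hα0 h, hδδ h]
  · have hαβ : α - β ≠ 0 := sub_ne_zero.mpr hab
    set θ : F := (δ * α - β * δ ^ Q) / (α - β) with hθ
    have hθn : θ ^ n = δ := by
      rw [hθ, div_pow, heq', mul_div_assoc, div_self (pow_ne_zero n hαβ), mul_one]
    -- Frobenius computations
    have hfrob : ∀ x y : F, (x - y) ^ Q = x ^ Q - y ^ Q := by
      intro x y; rw [hQ]; exact sub_pow_char_pow x y e
    have hδQQ : (δ ^ Q) ^ Q = δ := by
      have := FiniteField.pow_card δ
      rw [hF] at this
      rw [← pow_mul, ← pow_two]; exact this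
    have hαinv : α ^ Q = α⁻¹ := by
      field_simp
      rw [← pow_succ]; exact hα
    have hβinv : β ^ Q = β⁻¹ := by
      field_simp
      rw [← pow_succ]; exact hβ
    have hθQ : θ ^ Q = θ := by
      rw [hθ, div_pow, hfrob, hfrob, mul_pow, mul_pow, hδQQ, hαinv, hβinv]
      rw [div_eq_div_iff]
      · field_simp; ring
      · rw [← hαinv, ← hβinv, ← hfrob]
        exact pow_ne_zero Q hαβ
      · exact hαβ
    apply hδ
    calc δ ^ Q = (θ ^ n) ^ Q := by rw [hθn]
    _ = (θ ^ Q) ^ n := by rw [← pow_mul, mul_comm, pow_mul]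
    _ = θ ^ n := by rw [hθQ]
    _ = δ := hθn
end

section
/- Let Q be a prime power with Q not divisible by 3, and k a nonnegative integer. The polynomial g(x) := x^{k(Q+1)+3} + 3x^{k(Q+1)+Q+2} - x^{k(Q+1)+3Q} permutes F_{Q^2} if and only if gcd(2k + 3, Q - 1) = 1. -/
/-!
Write the polynomial as `g x = x ^ r * cubic (x ^ (Q - 1))` with `r = k (Q + 1) + 3`, and note
`gcd (r, Q - 1) = gcd (2 k + 3, Q - 1)`. If this gcd is not `1`, some `ζ ≠ 1` with
`ζ ^ r = ζ ^ (Q - 1) = 1` satisfies `g ζ = g 1`.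

Conversely, `T = x ^ (Q - 1)` is a `(Q + 1)`-st root of unity, so the `Q`-power Frobenius inverts
it; hence `cubic T ≠ 0` and `g x ^ Q = x ^ r * cubicRev T`, where `cubicRev T = T ^ 3 cubic (1 / T)`.
So `g x = g y` gives `cubicRev T * cubic U = cubicRev U * cubic T` for `U = y ^ (Q - 1)`. For a
primitive cube root of unity `ω` one has `cubicRev - ω cubic = -ω ^ 2 (X - ω) ^ 3`, so
`(T - ω) (U - ω²)` and `(T - ω²) (U - ω)` have equal cubes; Frobenius relates them as well, and
since `3 ∤ Q ± 1` (with the sign matching the action of Frobenius on `ω`), they are equal, which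
means `T = U`. Finally `x ^ r = y ^ r` and `x ^ (Q - 1) = y ^ (Q - 1)` with coprime exponents give
`x = y`.
-/

open Function

section Field

variable {F : Type*} [Field F]

def cubic (T : F) : F := 1 + 3 * T - T ^ 3

def cubicRev (T : F) : F := T ^ 3 + 3 * T ^ 2 - 1

lemma eq_of_pow_eq_pow_of_coprime {a b : F} {m n : ℕ} (hmn : m.Coprime n)
    (hm : a ^ m = b ^ m) (hn : a ^ n = b ^ n) : a = b := by
  rcases eq_or_ne b 0 with rfl | hb
  · rcases Nat.eq_zero_or_pos m with rfl | hm0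
    · rw [Nat.coprime_zero_left] at hmn
      simpa [hmn] using hn
    · exact pow_eq_zero_iff hm0.ne' |>.mp (by simpa [hm0.ne'] using hm)
  · have h : (a / b) ^ m.gcd n = 1 := pow_gcd_eq_one.mpr
      ⟨by rw [div_pow, hm, div_self (pow_ne_zero _ hb)],
       by rw [div_pow, hn, div_self (pow_ne_zero _ hb)]⟩
    rwa [hmn, pow_one, div_eq_one_iff_eq hb] at h

lemma eq_of_pow_succ_mul_eq_self {a b t : F} {m n : ℕ} (hmn : m.Coprime n) (hn : n ≠ 0)
    (ha : a ^ (m + 1) * t = a) (hb : b ^ (m + 1) * t = b) (h : a ^ n = b ^ n) : a = b := by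
  refine eq_of_pow_eq_pow_of_coprime hmn ?_ h
  rcases eq_or_ne a 0 with rfl | ha0
  · obtain rfl : b = 0 := (pow_eq_zero_iff hn).mp (by rw [← h, zero_pow hn])
    rfl
  have hb0 : b ≠ 0 := fun hb0 ↦ ha0 <| (pow_eq_zero_iff hn).mp <| by rw [h, hb0, zero_pow hn]
  have hinv {x : F} (hx0 : x ≠ 0) (hx : x ^ (m + 1) * t = x) : x ^ m = t⁻¹ :=
    eq_inv_of_mul_eq_one_left (mul_right_cancel₀ hx0 (by linear_combination hx))
  rw [hinv ha0 ha, hinv hb0 hb]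

lemma pow_eq_inv_of_pow_succ_eq_one {T : F} {n : ℕ} (hT : T ^ (n + 1) = 1) : T ^ n = T⁻¹ :=
  eq_inv_of_mul_eq_one_left (by rwa [← pow_succ])

lemma cubicRev_sub_mul_cubic {ω : F} (hω : ω ^ 2 + ω + 1 = 0) (T : F) :
    cubicRev T - ω * cubic T = -ω ^ 2 * (T - ω) ^ 3 := by
  unfold cubicRev cubic
  linear_combination (T ^ 3 - 3 * (ω - 1) * T ^ 2 + 3 * ω * (ω - 1) * T - 1 - ω ^ 2 * (ω - 1)) * hω

lemma cube_eq_cube_of_cubicRev_mul_cubic_eq {ω T U : F} (hω : ω ^ 2 + ω + 1 = 0)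
    (h : cubicRev T * cubic U = cubicRev U * cubic T) :
    ((T - ω) * (U - ω ^ 2)) ^ 3 = ((T - ω ^ 2) * (U - ω)) ^ 3 := by
  have hω2 : (ω ^ 2) ^ 2 + ω ^ 2 + 1 = 0 := by linear_combination (ω ^ 2 - ω + 1) * hω
  have hω0 : ω ≠ 0 := by rintro rfl; norm_num at hω
  have hcross : (cubicRev T - ω * cubic T) * (cubicRev U - ω ^ 2 * cubic U) =
      (cubicRev T - ω ^ 2 * cubic T) * (cubicRev U - ω * cubic U) := by
    linear_combination (ω - ω ^ 2) * h
  rw [cubicRev_sub_mul_cubic hω, cubicRev_sub_mul_cubic hω, cubicRev_sub_mul_cubic hω2,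
    cubicRev_sub_mul_cubic hω2] at hcross
  exact mul_left_cancel₀ (pow_ne_zero 6 hω0) (by linear_combination hcross)

lemma trinomial_eq_mul_cubic (k q : ℕ) (hq : q ≠ 0) (x : F) :
    x ^ (k * (q + 1) + 3) + 3 * x ^ (k * (q + 1) + q + 2) - x ^ (k * (q + 1) + 3 * q) =
      x ^ (k * (q + 1) + 3) * cubic (x ^ (q - 1)) := by
  obtain ⟨s, rfl⟩ : ∃ s, q = s + 1 := ⟨q - 1, by omega⟩
  rw [Nat.add_sub_cancel, cubic]
  ring

variable {p e : ℕ} [ExpChar F p]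

lemma cubic_pow_expChar_pow_mul_cube {T : F} (hT : T ^ (p ^ e + 1) = 1) :
    cubic T ^ p ^ e * T ^ 3 = cubicRev T := by
  have hT0 : T ≠ 0 := by rintro rfl; simp at hT
  simp only [cubic, cubicRev, ← iterateFrobenius_def, map_sub, map_add, map_mul, map_one,
    map_ofNat, map_pow]
  rw [iterateFrobenius_def, pow_eq_inv_of_pow_succ_eq_one hT]
  field_simp

lemma cubic_ne_zero {T : F} (h3 : (3 : F) ≠ 0) (hT : T ^ (p ^ e + 1) = 1) : cubic T ≠ 0 := by
  intro hD
  have hT0 : T ≠ 0 := by rintro rfl; simp at hT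
  have hN : cubicRev T = 0 := by
    rw [← cubic_pow_expChar_pow_mul_cube hT, hD, zero_pow (expChar_pow_pos F p e).ne', zero_mul]
  unfold cubic at hD
  unfold cubicRev at hN
  have hT1 : T = -1 := by
    have : 3 * T * (T + 1) = 0 := by linear_combination hD + hN
    simpa [h3, hT0, add_eq_zero_iff_eq_neg] using this
  rw [hT1] at hD
  norm_num at hD

lemma sub_mul_sub_pow_expChar_pow_mul {ζ T U : F} (hζ : ζ ^ 3 = 1) (hT : T ^ (p ^ e + 1) = 1)
    (hU : U ^ (p ^ e + 1) = 1) :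
    ((T - ζ) * (U - ζ ^ 2)) ^ p ^ e * (T * U) = (T - (ζ ^ p ^ e) ^ 2) * (U - ζ ^ p ^ e) := by
  have hT0 : T ≠ 0 := by rintro rfl; simp at hT
  have hU0 : U ≠ 0 := by rintro rfl; simp at hU
  have hζq : (ζ ^ p ^ e) ^ 3 = 1 := by rw [← pow_mul, mul_comm, pow_mul, hζ, one_pow]
  rw [mul_pow, sub_pow_expChar_pow, sub_pow_expChar_pow, pow_eq_inv_of_pow_succ_eq_one hT,
    pow_eq_inv_of_pow_succ_eq_one hU, ← pow_mul, mul_comm 2, pow_mul]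
  generalize ζ ^ p ^ e = z at hζq ⊢
  field_simp
  linear_combination (T * U - 1) * hζq

lemma eq_of_cubicRev_mul_cubic_eq {ω T U : F} (hω : ω ^ 2 + ω + 1 = 0) (h3 : (3 : F) ≠ 0)
    (h3q : ¬ 3 ∣ p ^ e) (hT : T ^ (p ^ e + 1) = 1) (hU : U ^ (p ^ e + 1) = 1)
    (h : cubicRev T * cubic U = cubicRev U * cubic T) : T = U := by
  have hω3 : ω ^ 3 = 1 := by linear_combination (ω - 1) * hω
  have hT0 : T ≠ 0 := by rintro rfl; simp at hT
  have hU0 : U ≠ 0 := by rintro rfl; simp at hU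
  have hc := sub_mul_sub_pow_expChar_pow_mul hω3 hT hU
  have hd := sub_mul_sub_pow_expChar_pow_mul hω3 hU hT
  rw [mul_comm (U - ω), mul_comm U T] at hd
  have hcube := cube_eq_cube_of_cubicRev_mul_cubic_eq hω h
  set c := (T - ω) * (U - ω ^ 2)
  set d := (T - ω ^ 2) * (U - ω)
  have hcd : c = d := by
    rcases (by omega : p ^ e % 3 = 1 ∨ p ^ e % 3 = 2) with hq | hq
    · -- Frobenius fixes `ω`, so it swaps `c` and `d` up to the factor `T * U`.
      rw [pow_eq_pow_mod _ hω3, hq, pow_one] at hc hd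
      have hpow : c ^ (p ^ e + 1) = d ^ (p ^ e + 1) := by
        apply mul_right_cancel₀ (mul_ne_zero hT0 hU0)
        linear_combination c * hc - d * hd
      exact eq_of_pow_eq_pow_of_coprime
        (Nat.prime_three.coprime_iff_not_dvd.mpr (by omega)).symm hpow hcube
    · -- Frobenius swaps `ω` and `ω ^ 2`, so it fixes `c` and `d` up to the factor `T * U`.
      have hω4 : (ω ^ 2) ^ 2 = ω := by linear_combination ω * hω3
      rw [pow_eq_pow_mod _ hω3, hq, hω4] at hc hd
      rw [← Nat.sub_one_add_one (expChar_pow_pos F p e).ne'] at hc hd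
      exact eq_of_pow_succ_mul_eq_self (Nat.prime_three.coprime_iff_not_dvd.mpr (by omega)).symm
        three_ne_zero hc (by linear_combination hd) hcube
  have hωω : (ω - ω ^ 2) ^ 2 = -3 := by linear_combination (ω ^ 2 - 2 * ω + 2) * hω - hω3
  have hω0 : ω - ω ^ 2 ≠ 0 := fun h0 ↦ h3 (by linear_combination hωω - (ω - ω ^ 2) * h0)
  have hTU : (ω - ω ^ 2) * (T - U) = 0 := by linear_combination hcd
  exact sub_eq_zero.mp ((mul_eq_zero.mp hTU).resolve_left hω0)

lemma pow_mul_cubic_pow_expChar_pow {x : F} (hx : (x ^ (p ^ e - 1)) ^ (p ^ e + 1) = 1) (k : ℕ) :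
    (x ^ (k * (p ^ e + 1) + 3) * cubic (x ^ (p ^ e - 1))) ^ p ^ e =
      x ^ (k * (p ^ e + 1) + 3) * cubicRev (x ^ (p ^ e - 1)) := by
  set T := x ^ (p ^ e - 1)
  set r := k * (p ^ e + 1) + 3
  have hxr : (x ^ r) ^ p ^ e = x ^ r * T ^ 3 := by
    have hTr : T ^ r = T ^ 3 := by rw [pow_add, pow_mul', hx, one_pow, one_mul]
    rw [← hTr, ← pow_mul, ← pow_mul, ← pow_add, add_comm, ← Nat.succ_mul,
      Nat.succ_eq_add_one, Nat.sub_one_add_one (expChar_pow_pos F p e).ne', mul_comm]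
  rw [mul_pow, hxr, mul_assoc, mul_comm (T ^ 3), cubic_pow_expChar_pow_mul_cube hx]

end Field

section FiniteField

variable {F : Type*} [Field F] [Fintype F]

lemma FiniteField.exists_ne_one_pow_eq_one {d : ℕ} (hd : d ∣ Fintype.card F - 1) (hd1 : d ≠ 1) :
    ∃ ζ : F, ζ ≠ 1 ∧ ζ ^ d = 1 := by
  classical
  obtain ⟨l, hl, hld⟩ := Nat.exists_prime_and_dvd hd1
  have := Fact.mk hl
  obtain ⟨ζ, hζ⟩ := exists_prime_orderOf_dvd_card (G := Fˣ) l
    (by rw [Fintype.card_units]; exact hld.trans hd)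
  refine ⟨ζ, fun h ↦ hl.one_lt.ne' ?_, ?_⟩
  · rw [← hζ, Units.val_eq_one.mp h, orderOf_one]
  · rw [← Units.val_pow_eq_pow_val, orderOf_dvd_iff_pow_eq_one.mp (hζ ▸ hld), Units.val_one]

lemma not_injective_of_gcd_ne_one {r s : ℕ} (hs : s ∣ Fintype.card F - 1) (h : r.gcd s ≠ 1)
    (D : F → F) : ¬ Injective fun x : F ↦ x ^ r * D (x ^ s) := by
  obtain ⟨ζ, hζ1, hζ⟩ := FiniteField.exists_ne_one_pow_eq_one ((Nat.gcd_dvd_right r s).trans hs) h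
  obtain ⟨hr, hs⟩ := pow_gcd_eq_one.mp hζ
  exact fun hinj ↦ hζ1 (hinj (by simp only [hr, hs, one_pow]))

lemma pow_sub_one_pow_add_one_eq_one {q : ℕ} (hF : Fintype.card F = q ^ 2) {x : F} (hx : x ≠ 0) :
    (x ^ (q - 1)) ^ (q + 1) = 1 := by
  rw [← pow_mul, mul_comm, ← one_pow 2, ← Nat.sq_sub_sq, one_pow, ← hF]
  exact FiniteField.pow_card_sub_one_eq_one x hx

lemma FiniteField.exists_sq_add_self_add_one_eq_zero {q : ℕ} (hF : Fintype.card F = q ^ 2)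
    (h3q : ¬ 3 ∣ q) : ∃ ω : F, ω ^ 2 + ω + 1 = 0 := by
  obtain ⟨ω, hω1, hω3⟩ := FiniteField.exists_ne_one_pow_eq_one (F := F) (d := 3)
    (by rw [hF, ← one_pow 2, Nat.sq_sub_sq]; exact Nat.prime_three.dvd_mul.mpr (by omega))
    (by norm_num)
  refine ⟨ω, (mul_eq_zero.mp ?_).resolve_left (sub_ne_zero.mpr hω1)⟩
  linear_combination hω3

variable {p e : ℕ} [ExpChar F p]

lemma injective_pow_mul_cubic (hF : Fintype.card F = (p ^ e) ^ 2) (h3 : (3 : F) ≠ 0)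
    (h3q : ¬ 3 ∣ p ^ e) {k : ℕ} (hk : (k * (p ^ e + 1) + 3).Coprime (p ^ e - 1)) :
    Injective fun x : F ↦ x ^ (k * (p ^ e + 1) + 3) * cubic (x ^ (p ^ e - 1)) := by
  obtain ⟨ω, hω⟩ := FiniteField.exists_sq_add_self_add_one_eq_zero hF h3q
  set r := k * (p ^ e + 1) + 3
  have hμ {x : F} (hx : x ≠ 0) := pow_sub_one_pow_add_one_eq_one hF hx
  have hf0 (x : F) : x ^ r * cubic (x ^ (p ^ e - 1)) = 0 ↔ x = 0 := by
    refine ⟨fun h ↦ by_contra fun hx ↦ mul_ne_zero (pow_ne_zero _ hx) (cubic_ne_zero h3 (hμ hx)) h,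
      ?_⟩
    rintro rfl
    simp [r]
  intro x y hxy
  beta_reduce at hxy
  rcases eq_or_ne x 0 with rfl | hx
  · exact ((hf0 y).mp (hxy ▸ (hf0 0).mpr rfl)).symm
  rcases eq_or_ne y 0 with rfl | hy
  · exact (hf0 x).mp (hxy ▸ (hf0 0).mpr rfl)
  have hN : x ^ r * cubicRev (x ^ (p ^ e - 1)) = y ^ r * cubicRev (y ^ (p ^ e - 1)) := by
    rw [← pow_mul_cubic_pow_expChar_pow (hμ hx), ← pow_mul_cubic_pow_expChar_pow (hμ hy), hxy]
  have hT : x ^ (p ^ e - 1) = y ^ (p ^ e - 1) := by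
    refine eq_of_cubicRev_mul_cubic_eq hω h3 h3q (hμ hx) (hμ hy)
      (mul_left_cancel₀ (mul_ne_zero (pow_ne_zero r hx) (pow_ne_zero r hy)) ?_)
    linear_combination y ^ r * cubic (y ^ (p ^ e - 1)) * hN -
      y ^ r * cubicRev (y ^ (p ^ e - 1)) * hxy
  rw [hT] at hxy
  exact eq_of_pow_eq_pow_of_coprime hk (mul_right_cancel₀ (cubic_ne_zero h3 (hμ hy)) hxy) hT

end FiniteField

theorem stmt_9 (p e Q : ℕ) (hp : p.Prime) (he : 0 < e) (hQ : Q = p ^ e)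
    (h3 : ¬ (3 ∣ Q)) (k : ℕ)
    (F : Type*) [Field F] [Fintype F] (hF : Fintype.card F = Q ^ 2) :
    Function.Bijective (fun x : F => x ^ (k * (Q + 1) + 3) +
        3 * x ^ (k * (Q + 1) + Q + 2) - x ^ (k * (Q + 1) + 3 * Q)) ↔
      Nat.gcd (2 * k + 3) (Q - 1) = 1 := by
  subst hQ
  have := Fact.mk hp
  have : CharP F p := charP_of_card_eq_prime_pow (f := e * 2) (by rw [hF, ← pow_mul])
  have h3F : (3 : F) ≠ 0 := by
    intro h0
    obtain rfl : p = 3 := (Nat.prime_dvd_prime_iff_eq hp Nat.prime_three).mp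
      ((CharP.cast_eq_zero_iff F p 3).mp (by exact_mod_cast h0))
    exact h3 (dvd_pow_self 3 he.ne')
  have hgcd : (k * (p ^ e + 1) + 3).gcd (p ^ e - 1) = (2 * k + 3).gcd (p ^ e - 1) := by
    obtain ⟨s, hs⟩ : ∃ s, p ^ e = s + 1 := ⟨p ^ e - 1, by have := pow_pos hp.pos e; omega⟩
    rw [hs, Nat.add_sub_cancel, ← Nat.gcd_add_mul_right_left s (2 * k + 3) k]
    ring_nf
  have hdvd : p ^ e - 1 ∣ Fintype.card F - 1 := by
    rw [hF, ← one_pow 2, Nat.sq_sub_sq]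
    exact dvd_mul_left _ _
  rw [funext (trinomial_eq_mul_cubic k _ (pow_pos hp.pos e).ne'), ← hgcd,
    ← Finite.injective_iff_bijective]
  exact ⟨fun hinj ↦ by_contra fun h ↦ not_injective_of_gcd_ne_one hdvd h cubic hinj,
    injective_pow_mul_cubic hF h3F h3⟩
end

section
/- Let Q be a prime power with 3 ∤ Q. Then x^{Q+4} + 3x^{2Q+3} - x^{4Q+1} is a permutation polynomial over F_{Q^2} if and only if Q ≢ 1 (mod 5). -/
private lemma sq_sub_one_factor (Q : ℕ) (h : 1 ≤ Q) : (Q - 1) * (Q + 1) = Q ^ 2 - 1 := by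
  obtain ⟨m, rfl⟩ := Nat.exists_eq_add_of_le h
  have h2 : (1 + m) ^ 2 = m * (m + 2) + 1 := by ring
  have h3 : 1 + m - 1 = m := by omega
  have h4 : 1 + m + 1 = m + 2 := by omega
  rw [h3, h4, h2]
  omega

section aux

variable {F : Type*} [Field F]

/-- If `u` is on the unit circle `μ_{Q+1}`, then `1 + 3u - u³ ≠ 0`. -/
private lemma D_ne_zero (Q : ℕ) (hQ1 : 1 ≤ Q) (φ : F →+* F) (hφ : ∀ x : F, φ x = x ^ Q)
    (s u : F) (hs : s ^ 2 = s - 1) (h3 : (3 : F) ≠ 0)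
    (hu : u ^ (Q + 1) = 1) : 1 + 3 * u - u ^ 3 ≠ 0 := by
  intro hD
  have hu' : u ^ Q * u = 1 := by rw [← pow_succ]; exact hu
  have hs0 : s ≠ 0 := by
    intro h
    exact one_ne_zero (α := F) (by linear_combination hs + (1 - s) * h)
  -- apply Frobenius to hD
  have hDQ : 1 + 3 * u ^ Q - (u ^ Q) ^ 3 = 0 := by
    have h := congrArg φ hD
    simp only [map_add, map_sub, map_mul, map_one, map_pow, map_ofNat, map_zero] at h
    rw [hφ] at h
    exact h
  -- multiply by u^3 : N(u) = 0
  have hN : u ^ 3 + 3 * u ^ 2 - 1 = 0 := by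
    calc u ^ 3 + 3 * u ^ 2 - 1
        = (1 + 3 * u ^ Q - (u ^ Q) ^ 3) * u ^ 3 := by
          linear_combination ((u ^ Q * u) ^ 2 + u ^ Q * u + 1 - 3 * u ^ 2) * hu'
      _ = 0 := by rw [hDQ, zero_mul]
  -- N + s·D = (1-s)(u+s)^3 = 0
  have hcube : (1 - s) * (u + s) ^ 3 = 0 := by
    linear_combination hN + s * hD - (3 * u ^ 2 + 3 * s * u + s ^ 2 - 1) * hs
  have h1s : (1 : F) - s ≠ 0 := by
    intro h
    exact h3 (by linear_combination 3 * hs + 3 * s * h)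
  have hus : u + s = 0 := by
    have := (mul_eq_zero.mp hcube).resolve_left h1s
    exact (pow_eq_zero_iff (by norm_num : (3:ℕ) ≠ 0)).mp this
  -- now 3*s = 0, contradiction
  have hu_eq : u = -s := by linear_combination hus
  rw [hu_eq] at hD
  have h3s : 3 * s = 0 := by linear_combination -hD + (s + 1) * hs
  rcases mul_eq_zero.mp h3s with h | h
  · exact h3 h
  · exact hs0 h

/-- Core injectivity on the circle `μ_{Q+1}`. -/
private lemma circle_core (Q : ℕ) (φ : F →+* F) (hφ : ∀ x : F, φ x = x ^ Q)
    (s u v : F) (hs : s ^ 2 = s - 1) (h3 : (3 : F) ≠ 0)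
    (hu : u ^ (Q + 1) = 1) (hv : v ^ (Q + 1) = 1)
    (huv : (u ^ 3 + 3 * u ^ 2 - 1) * (1 + 3 * v - v ^ 3)
         = (v ^ 3 + 3 * v ^ 2 - 1) * (1 + 3 * u - u ^ 3)) :
    u = v := by
  have hu' : u ^ Q * u = 1 := by rw [← pow_succ]; exact hu
  have hv' : v ^ Q * v = 1 := by rw [← pow_succ]; exact hv
  have hu0 : u ≠ 0 := by
    intro h; rw [h, zero_pow (by omega : Q + 1 ≠ 0)] at hu; exact one_ne_zero hu.symm
  have hv0 : v ≠ 0 := by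
    intro h; rw [h, zero_pow (by omega : Q + 1 ≠ 0)] at hv; exact one_ne_zero hv.symm
  have h2s : (1 : F) - 2 * s ≠ 0 := by
    intro h
    exact h3 (by linear_combination (2 * s - 1) * h + 4 * hs)
  -- s^Q is a root of X² - X + 1
  have hsQ : s ^ Q = s ∨ s ^ Q = 1 - s := by
    have h1 : (s ^ Q) ^ 2 = s ^ Q - 1 := by
      have h := congrArg φ hs
      simp only [map_sub, map_one, map_pow] at h
      rw [hφ] at h
      exact h
    have h0 : (s ^ Q - s) * (s ^ Q - (1 - s)) = 0 := by linear_combination h1 - hs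
    rcases mul_eq_zero.mp h0 with h | h
    · exact Or.inl (by linear_combination h)
    · exact Or.inr (by linear_combination h)
  set a : F := (u + s) * (v + (1 - s)) with ha_def
  set b : F := (v + s) * (u + (1 - s)) with hb_def
  have hab : a ^ 3 = b ^ 3 := by
    rw [ha_def, hb_def]
    linear_combination (1 - 2 * s) * huv +
      (-6*s^3*u + 6*s^3*v + 9*s^2*u - 9*s^2*v - 2*s*u^3 + 18*s*u^2*v + 6*s*u^2 - 18*s*u*v^2
        + 3*s*u + 2*s*v^3 - 6*s*v^2 - 3*s*v + u^3 - 9*u^2*v - 3*u^2 + 9*u*v^2 - 3*u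
        - v^3 + 3*v^2 + 3*v) * hs
  by_cases hb0 : b = 0
  · -- degenerate case : both a and b vanish
    have ha0 : a = 0 := by
      have h : a ^ 3 = 0 := by rw [hab, hb0]; ring
      exact (pow_eq_zero_iff (by norm_num : (3:ℕ) ≠ 0)).mp h
    rcases mul_eq_zero.mp ha0 with h1 | h1 <;> rcases mul_eq_zero.mp hb0 with h2 | h2
    · linear_combination h1 - h2
    · exact absurd (by linear_combination h2 - h1) h2s
    · exact absurd (by linear_combination h1 - h2) h2s
    · linear_combination h2 - h1
  · have ha0 : a ≠ 0 := by
      intro h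
      apply hb0
      have hb3 : b ^ 3 = 0 := by rw [← hab, h]; ring
      exact (pow_eq_zero_iff (by norm_num : (3:ℕ) ≠ 0)).mp hb3
    have huv0 : u * v ≠ 0 := mul_ne_zero hu0 hv0
    set r : F := a / b with hr_def
    have hr3 : r ^ 3 = 1 := by rw [hr_def, div_pow, hab, div_self (pow_ne_zero _ hb0)]
    have haQ : a ^ Q = (u ^ Q + s ^ Q) * (v ^ Q + (1 - s ^ Q)) := by
      rw [← hφ, ha_def, map_mul, map_add, map_add, map_sub, map_one, hφ, hφ, hφ]
    have hbQ : b ^ Q = (v ^ Q + s ^ Q) * (u ^ Q + (1 - s ^ Q)) := by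
      rw [← hφ, hb_def, map_mul, map_add, map_add, map_sub, map_one, hφ, hφ, hφ]
    have hreq : r = 1 := by
      by_contra hr1
      -- r is a primitive cube root of unity, hence s² or s⁴
      have h210 : r ^ 2 + r + 1 = 0 := by
        have h0 : (r - 1) * (r ^ 2 + r + 1) = 0 := by linear_combination hr3
        exact (mul_eq_zero.mp h0).resolve_left (sub_ne_zero.mpr hr1)
      have hr2 : (r - s ^ 2) * (r - s ^ 4) = 0 := by
        linear_combination h210 + (s^4 + s^3 - s^2*r - s*r - s - r - 1) * hs
      rcases hsQ with hsA | hsB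
      · -- case A : s^Q = s
        have haQ' : a ^ Q * (u * v) = b := by
          rw [haQ, hsA, hb_def]
          linear_combination (-(s*v) + v * (v ^ Q) + v) * hu' + (s*u + 1) * hv' + (1 - u*v) * hs
        have hbQ' : b ^ Q * (u * v) = a := by
          rw [hbQ, hsA, ha_def]
          linear_combination (s*v + 1) * hu' + (-(s*u) + u * (u ^ Q) + u) * hv' + (1 - u*v) * hs
        have hkey : a ^ Q * a = b ^ Q * b := by
          apply mul_right_cancel₀ huv0
          linear_combination a * haQ' - b * hbQ'
        have hrr : r ^ Q * r = 1 := by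
          rw [hr_def, div_pow, div_mul_div_comm, hkey,
            div_self (mul_ne_zero (pow_ne_zero _ hb0) hb0)]
        rcases mul_eq_zero.mp hr2 with h | h
        · have hr' : r = s ^ 2 := by linear_combination h
          rw [hr', pow_right_comm, hsA] at hrr
          exact h3 (by linear_combination (s - 2) * hrr + ((2 - s)*(s^2 + s) + 1) * hs)
        · have hr' : r = s ^ 4 := by linear_combination h
          rw [hr', pow_right_comm, hsA] at hrr
          exact h3 (by linear_combination (-s - 1) * hrr
            + ((s + 1)*(s^6 + s^5 - s^3 - s^2 + 1) + 1) * hs)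
      · -- case B : s^Q = 1 - s
        have haQ' : a ^ Q * (u * v) = a := by
          rw [haQ, hsB, ha_def]
          linear_combination (s*v + v * (v ^ Q)) * hu' + (-(s*u) + u + 1) * hv' + (1 - u*v) * hs
        have hbQ' : b ^ Q * (u * v) = b := by
          rw [hbQ, hsB, hb_def]
          linear_combination (-(s*v) + v + 1) * hu' + (s*u + u * (u ^ Q)) * hv' + (1 - u*v) * hs
        have hkey : a ^ Q * b = b ^ Q * a := by
          apply mul_right_cancel₀ huv0
          linear_combination b * haQ' - a * hbQ'
        have hrQ : r ^ Q = r := by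
          rw [hr_def, div_pow, div_eq_div_iff (pow_ne_zero _ hb0) hb0]
          exact hkey.trans (mul_comm _ _)
        rcases mul_eq_zero.mp hr2 with h | h
        · have hr' : r = s ^ 2 := by linear_combination h
          rw [hr', pow_right_comm, hsB] at hrQ
          exact h2s (by linear_combination hrQ)
        · have hr' : r = s ^ 4 := by linear_combination h
          rw [hr', pow_right_comm, hsB] at hrQ
          exact h2s (by linear_combination -hrQ + (2 - 4*s) * hs)
    have hab' : a = b := (div_eq_one_iff_eq hb0).mp hreq
    have h0 : (1 - 2 * s) * (u - v) = 0 := by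
      rw [ha_def, hb_def] at hab'
      linear_combination hab'
    have := (mul_eq_zero.mp h0).resolve_left h2s
    linear_combination this

end aux

theorem stmt_12 (p e Q : ℕ) (hp : p.Prime) (he : 0 < e) (hQ : Q = p ^ e)
    (h3 : ¬ (3 ∣ Q))
    (F : Type*) [Field F] [Fintype F] (hF : Fintype.card F = Q ^ 2) :
    Function.Bijective (fun x : F =>
        x ^ (Q + 4) + 3 * x ^ (2 * Q + 3) - x ^ (4 * Q + 1)) ↔
      Q % 5 ≠ 1 := by
  classical
  have hQ2 : 2 ≤ Q := by
    rw [hQ]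
    calc 2 = 2 ^ 1 := by norm_num
    _ ≤ p ^ e := Nat.pow_le_pow_left hp.two_le e |>.trans' (by
      exact Nat.pow_le_pow_right (by norm_num) he)
  have hfact : (Q - 1) * (Q + 1) = Q ^ 2 - 1 := sq_sub_one_factor Q (by omega)
  have hcardU : Fintype.card Fˣ = Q ^ 2 - 1 := by rw [Fintype.card_units, hF]
  constructor
  · -- bijective → Q % 5 ≠ 1
    intro hbij hQ51
    have h51 : 5 ∣ Q - 1 := by omega
    have h5card : 5 ∣ Fintype.card Fˣ := by
      rw [hcardU, ← hfact]
      exact h51.mul_right _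
    haveI : Fact (Nat.Prime 5) := ⟨by norm_num⟩
    obtain ⟨ζ, hζ⟩ := exists_prime_orderOf_dvd_card 5 h5card
    have hl5 : (ζ : F) ^ 5 = 1 := by
      have h : ζ ^ 5 = 1 := by rw [← hζ]; exact pow_orderOf_eq_one ζ
      have := congrArg (Units.val) h
      simpa using this
    have hlq : (ζ : F) ^ (Q - 1) = 1 := by
      have h : ζ ^ (Q - 1) = 1 := orderOf_dvd_iff_pow_eq_one.mp (hζ ▸ h51)
      have := congrArg (Units.val) h
      simpa using this
    have hne : (ζ : F) ≠ 1 := by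
      intro h
      have h1 : ζ = 1 := Units.ext (by simpa using h)
      rw [h1, orderOf_one] at hζ
      norm_num at hζ
    have e1 : (ζ : F) ^ (Q + 4) = 1 := by
      rw [show Q + 4 = (Q - 1) + 5 by omega, pow_add, hlq, hl5, one_mul]
    have e2 : (ζ : F) ^ (2 * Q + 3) = 1 := by
      rw [show 2 * Q + 3 = (Q - 1) * 2 + 5 by omega, pow_add, pow_mul, hlq, one_pow, hl5, one_mul]
    have e3 : (ζ : F) ^ (4 * Q + 1) = 1 := by
      rw [show 4 * Q + 1 = (Q - 1) * 4 + 5 by omega, pow_add, pow_mul, hlq, one_pow, hl5, one_mul]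
    have hfeq : (fun x : F => x ^ (Q + 4) + 3 * x ^ (2 * Q + 3) - x ^ (4 * Q + 1)) (ζ : F)
        = (fun x : F => x ^ (Q + 4) + 3 * x ^ (2 * Q + 3) - x ^ (4 * Q + 1)) 1 := by
      simp only [e1, e2, e3, one_pow]
    exact hne (hbij.injective hfeq)
  · -- Q % 5 ≠ 1 → bijective
    intro hQ5
    -- characteristic
    haveI : Fact p.Prime := ⟨hp⟩
    obtain ⟨p', hp'char⟩ := CharP.exists F
    haveI := hp'char
    have hp'prime : p'.Prime := CharP.char_is_prime F p'
    obtain ⟨n, hnp, hcard⟩ := FiniteField.card F p'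
    have hpp' : p' = p := by
      have hdvd : p' ∣ p := by
        have h1 : p' ∣ Q ^ 2 := by
          rw [← hF, hcard]
          exact dvd_pow_self p' n.ne_zero
        rw [hQ, ← pow_mul] at h1
        exact hp'prime.dvd_of_dvd_pow h1
      exact (Nat.prime_dvd_prime_iff_eq hp'prime hp).mp hdvd
    subst hpp'
    have h3F : (3 : F) ≠ 0 := by
      intro h
      have hd := (CharP.cast_eq_zero_iff F p' 3).mp h
      have : p' = 3 := (Nat.prime_dvd_prime_iff_eq hp'prime (by norm_num)).mp hd
      exact h3 (this ▸ hQ ▸ dvd_pow_self p' he.ne')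
    haveI : ExpChar F p' := ExpChar.prime hp'prime
    set φ : F →+* F := iterateFrobenius F p' e with hφdef
    have hφ : ∀ x : F, φ x = x ^ Q := fun x => by
      rw [hφdef, iterateFrobenius_def, hQ]
    have hcirc : ∀ x : F, x ≠ 0 → (x ^ (Q - 1)) ^ (Q + 1) = 1 := by
      intro x hx
      rw [← pow_mul, hfact, ← hF]
      exact FiniteField.pow_card_sub_one_eq_one x hx
    -- existence of s with s² = s - 1
    haveI : Fact (Nat.Prime 3) := ⟨by norm_num⟩
    have h3card : 3 ∣ Fintype.card Fˣ := by
      rw [hcardU, ← hfact]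
      rcases (by omega : 3 ∣ Q - 1 ∨ 3 ∣ Q + 1) with h | h
      · exact h.mul_right _
      · exact h.mul_left _
    obtain ⟨w, hw⟩ := exists_prime_orderOf_dvd_card 3 h3card
    have hw3 : (w : F) ^ 3 = 1 := by
      have h : w ^ 3 = 1 := by rw [← hw]; exact pow_orderOf_eq_one w
      have := congrArg (Units.val) h
      simpa using this
    have hwne : (w : F) ≠ 1 := by
      intro h
      have h1 : w = 1 := Units.ext (by simpa using h)
      rw [h1, orderOf_one] at hw
      norm_num at hw
    have homega : (w : F) ^ 2 + (w : F) + 1 = 0 := by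
      have h0 : ((w : F) - 1) * ((w : F) ^ 2 + (w : F) + 1) = 0 := by linear_combination hw3
      exact (mul_eq_zero.mp h0).resolve_left (sub_ne_zero.mpr hwne)
    set s : F := -(w : F) with hsdef
    have hs : s ^ 2 = s - 1 := by rw [hsdef]; linear_combination homega
    -- injectivity
    refine Finite.injective_iff_bijective.mp ?_
    intro x₁ x₂ hf
    simp only at hf
    have hform : ∀ x : F, x ^ (Q + 4) + 3 * x ^ (2 * Q + 3) - x ^ (4 * Q + 1)
        = x ^ 5 * (x ^ (Q - 1) * (1 + 3 * x ^ (Q - 1) - (x ^ (Q - 1)) ^ 3)) := by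
      intro x
      rw [show Q + 4 = 5 + (Q - 1) * 1 by omega, show 2 * Q + 3 = 5 + (Q - 1) * 2 by omega,
        show 4 * Q + 1 = 5 + (Q - 1) * 4 by omega, pow_add, pow_add, pow_add,
        pow_mul, pow_mul, pow_mul]
      ring
    rw [hform, hform] at hf
    have hnz : ∀ x : F, x ≠ 0 →
        x ^ 5 * (x ^ (Q - 1) * (1 + 3 * x ^ (Q - 1) - (x ^ (Q - 1)) ^ 3)) ≠ 0 := by
      intro x hx
      exact mul_ne_zero (pow_ne_zero _ hx) (mul_ne_zero (pow_ne_zero _ hx)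
        (D_ne_zero Q (by omega) φ hφ s _ hs h3F (hcirc x hx)))
    by_cases hx1 : x₁ = 0
    · by_cases hx2 : x₂ = 0
      · rw [hx1, hx2]
      · exfalso
        apply hnz x₂ hx2
        rw [← hf, hx1]
        simp
    · by_cases hx2 : x₂ = 0
      · exfalso
        apply hnz x₁ hx1
        rw [hf, hx2]
        simp
      · -- main case
        set u : F := x₁ ^ (Q - 1) with hu_def
        set v : F := x₂ ^ (Q - 1) with hv_def
        have hu : u ^ (Q + 1) = 1 := hcirc x₁ hx1
        have hv : v ^ (Q + 1) = 1 := hcirc x₂ hx2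
        have hu0 : u ≠ 0 := pow_ne_zero _ hx1
        have hv0 : v ≠ 0 := pow_ne_zero _ hx2
        have hu' : u ^ Q * u = 1 := by rw [← pow_succ]; exact hu
        have hv' : v ^ Q * v = 1 := by rw [← pow_succ]; exact hv
        have hDu : 1 + 3 * u - u ^ 3 ≠ 0 := D_ne_zero Q (by omega) φ hφ s u hs h3F hu
        have hDv : 1 + 3 * v - v ^ 3 ≠ 0 := D_ne_zero Q (by omega) φ hφ s v hs h3F hv
        -- apply Frobenius to hf
        have hf2 : (x₁ ^ Q) ^ 5 * (u ^ Q * (1 + 3 * u ^ Q - (u ^ Q) ^ 3))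
            = (x₂ ^ Q) ^ 5 * (v ^ Q * (1 + 3 * v ^ Q - (v ^ Q) ^ 3)) := by
          have h := congrArg φ hf
          simp only [map_mul, map_add, map_sub, map_one, map_pow, map_ofNat] at h
          simp only [hφ] at h
          exact h
        have hxQ1 : x₁ ^ Q = x₁ * u := by
          rw [hu_def, ← pow_succ']
          congr 1
          omega
        have hxQ2 : x₂ ^ Q = x₂ * v := by
          rw [hv_def, ← pow_succ']
          congr 1
          omega
        rw [hxQ1, hxQ2] at hf2
        -- derive the N-system
        have e2 : x₁ ^ 5 * (u * (u ^ 3 + 3 * u ^ 2 - 1))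
            = x₂ ^ 5 * (v * (v ^ 3 + 3 * v ^ 2 - 1)) := by
          linear_combination hf2
            + (x₁ ^ 5 * (u^4*(u ^ Q)^3 - 3*u^4*(u ^ Q) - u^4 + u^3*(u ^ Q)^2 - 3*u^3
                + u^2*(u ^ Q) + u)) * hu'
            + (x₂ ^ 5 * (-(v^4*(v ^ Q)^3) + 3*v^4*(v ^ Q) + v^4 - v^3*(v ^ Q)^2 + 3*v^3
                - v^2*(v ^ Q) - v)) * hv'
        have hA : x₁ ^ 5 * u ≠ 0 := mul_ne_zero (pow_ne_zero _ hx1) hu0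
        have hB : x₂ ^ 5 * v ≠ 0 := mul_ne_zero (pow_ne_zero _ hx2) hv0
        have hkey : (u ^ 3 + 3 * u ^ 2 - 1) * (1 + 3 * v - v ^ 3)
            = (v ^ 3 + 3 * v ^ 2 - 1) * (1 + 3 * u - u ^ 3) := by
          apply mul_left_cancel₀ (mul_ne_zero hA hB)
          linear_combination (x₂ ^ 5 * v * (1 + 3 * v - v ^ 3)) * e2
            - (x₂ ^ 5 * v * (v ^ 3 + 3 * v ^ 2 - 1)) * hf
        have huveq : u = v := circle_core Q φ hφ s u v hs h3F hu hv hkey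
        -- conclude x₁ = x₂
        have h5eq : x₁ ^ 5 = x₂ ^ 5 := by
          have h := hf
          rw [← huveq] at h
          exact mul_right_cancel₀ (mul_ne_zero hu0 hDu) h
        have hqeq : x₁ ^ (Q - 1) = x₂ ^ (Q - 1) := by rw [← hu_def, ← hv_def, huveq]
        have ht5 : (x₁ / x₂) ^ 5 = 1 := by
          rw [div_pow, h5eq, div_self (pow_ne_zero _ hx2)]
        have htq : (x₁ / x₂) ^ (Q - 1) = 1 := by
          rw [div_pow, hqeq, div_self (pow_ne_zero _ hx2)]
        have hdvd : orderOf (x₁ / x₂) ∣ Nat.gcd 5 (Q - 1) :=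
          Nat.dvd_gcd (orderOf_dvd_of_pow_eq_one ht5) (orderOf_dvd_of_pow_eq_one htq)
        have hgcd : Nat.gcd 5 (Q - 1) = 1 := by
          have h5p : Nat.Prime 5 := by norm_num
          have hnd : ¬ (5 ∣ Q - 1) := fun hd => hQ5 (by omega)
          exact (Nat.Prime.coprime_iff_not_dvd h5p).mpr hnd
        have h1 : orderOf (x₁ / x₂) = 1 := Nat.dvd_one.mp (hgcd ▸ hdvd)
        have hxx : x₁ / x₂ = 1 := orderOf_eq_one_iff.mp h1
        exact (div_eq_one_iff_eq hx2).mp hxx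
end

section
/- Let Q be a prime power with 3 ∤ Q. Then x^3 + 3x^{Q+2} - x^{3Q} is a permutation polynomial over F_{Q^2} if and only if Q ≡ 2 (mod 3). -/
theorem stmt_13 (p e Q : ℕ) (hp : p.Prime) (he : 0 < e) (hQ : Q = p ^ e)
    (h3 : ¬ (3 ∣ Q))
    (F : Type*) [Field F] [Fintype F] (hF : Fintype.card F = Q ^ 2) :
    Function.Bijective (fun x : F =>
        x ^ 3 + 3 * x ^ (Q + 2) - x ^ (3 * Q)) ↔
      Q % 3 = 2 := by
  have hQpos : 0 < Q := hQ ▸ pow_pos hp.pos e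
  have hQmod : Q % 3 = 1 ∨ Q % 3 = 2 := by
    have h0 : ¬ Q % 3 = 0 := fun h => h3 (Nat.dvd_of_mod_eq_zero h)
    omega
  -- characteristic
  haveI hfact : Fact p.Prime := ⟨hp⟩
  haveI hcharP : CharP F p := by
    refine (CharP.charP_iff_prime_eq_zero hp).mpr ?_
    have h0 : ((Fintype.card F : ℕ) : F) = 0 := Nat.cast_card_eq_zero F
    rw [hF, hQ, ← pow_mul] at h0
    push_cast at h0
    exact (pow_eq_zero_iff (Nat.mul_ne_zero he.ne' two_ne_zero)).mp h0
  -- Frobenius facts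
  have hadd : ∀ z w : F, (z + w) ^ Q = z ^ Q + w ^ Q := by
    intro z w; rw [hQ]; exact add_pow_char_pow z w p e
  have hsub : ∀ z w : F, (z - w) ^ Q = z ^ Q - w ^ Q := by
    intro z w; rw [hQ]; exact sub_pow_char_pow z w e
  have hQQ : ∀ z : F, (z ^ Q) ^ Q = z := by
    intro z; rw [← pow_mul, ← sq, ← hF]; exact FiniteField.pow_card z
  have hneg : ∀ z : F, (-z) ^ Q = -(z ^ Q) := by
    intro z
    have := hsub 0 z
    simpa [zero_pow hQpos.ne'] using this
  -- element of order 3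
  have h3card : (3 : ℕ) ∣ Nat.card Fˣ := by
    rw [Nat.card_units, Nat.card_eq_fintype_card, hF]
    have hsq : Q ^ 2 % 3 = 1 := by
      rw [Nat.pow_mod]
      rcases hQmod with h | h <;> rw [h] <;> norm_num
    have h1 : 1 ≤ Q ^ 2 := Nat.one_le_pow _ _ hQpos
    omega
  obtain ⟨g, hg⟩ := IsCyclic.exists_ofOrder_eq_natCard (α := Fˣ)
  have hgne : orderOf g ≠ 0 := by
    rw [hg]; exact Nat.card_pos.ne'
  have hg3 : (3 : ℕ) ∣ orderOf g := hg ▸ h3card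
  set ζ : Fˣ := g ^ (orderOf g / 3) with hζdef
  have hζord : orderOf ζ = 3 := orderOf_pow_orderOf_div hgne hg3
  set ω : F := (ζ : F) with hωdef
  have hω3 : ω ^ 3 = 1 := by
    have : ζ ^ 3 = 1 := by rw [← hζord]; exact pow_orderOf_eq_one ζ
    rw [hωdef, ← Units.val_pow_eq_pow_val, this, Units.val_one]
  have hω1 : ω ≠ 1 := by
    intro h
    have : ζ = 1 := Units.ext h
    rw [this, orderOf_one] at hζord; norm_num at hζord
  have hω0 : ω ≠ 0 := ζ.ne_zero
  have hω2 : ω ^ 2 + ω + 1 = 0 := by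
    have hfac : (ω - 1) * (ω ^ 2 + ω + 1) = 0 := by
      linear_combination hω3
    rcases mul_eq_zero.mp hfac with h | h
    · exact absurd (sub_eq_zero.mp h) hω1
    · exact h
  constructor
  · -- bijective → Q % 3 = 2
    intro hbij
    rcases hQmod with h1 | h2
    · exfalso
      have hωQ : ω ^ Q = ω := by
        conv_lhs => rw [← Nat.div_add_mod Q 3, h1]
        rw [pow_add, pow_mul, hω3, one_pow, one_mul, pow_one]
      have hval : (fun x : F => x ^ 3 + 3 * x ^ (Q + 2) - x ^ (3 * Q)) ω
          = (fun x : F => x ^ 3 + 3 * x ^ (Q + 2) - x ^ (3 * Q)) 1 := by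
        simp only [one_pow]
        have e1 : ω ^ (Q + 2) = 1 := by
          rw [pow_add, hωQ]; linear_combination hω3
        have e2 : ω ^ (3 * Q) = 1 := by
          rw [pow_mul, hω3, one_pow]
        rw [hω3, e1, e2]
      exact hω1 (hbij.injective hval)
    · exact h2
  · -- Q % 3 = 2 → bijective
    intro hm
    rw [Fintype.bijective_iff_injective_and_card]
    refine ⟨?_, rfl⟩
    intro x y hxy
    simp only at hxy
    have hωQ : ω ^ Q = ω ^ 2 := by
      conv_lhs => rw [← Nat.div_add_mod Q 3, hm]
      rw [pow_add, pow_mul, hω3, one_pow, one_mul]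
    -- set up a, b
    set a : F := -ω with hadef
    set b : F := -(ω ^ 2) with hbdef
    have hb : b = 1 - a := by rw [hadef, hbdef]; linear_combination -hω2
    have ha2 : a ^ 2 = a - 1 := by rw [hadef]; linear_combination hω2
    have hab : a * b = 1 := by rw [hadef, hbdef]; linear_combination hω3
    have haQ : a ^ Q = b := by
      rw [hadef, hneg, hωQ, hbdef]
    have hbQ : b ^ Q = a := by
      rw [hbdef, hneg, hadef, ← pow_mul, mul_comm 2 Q, pow_mul, hωQ, ← pow_mul]
      linear_combination (-ω) * hω3
    have hb3 : b ^ 3 = -1 := by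
      rw [hbdef]
      linear_combination (-(ω ^ 3) - 1) * hω3
    have habne : a - b ≠ 0 := by
      rw [hadef, hbdef]
      intro h
      have : ω * (ω - 1) = 0 := by linear_combination h
      rcases mul_eq_zero.mp this with h' | h'
      · exact hω0 h'
      · exact hω1 (sub_eq_zero.mp h')
    have hbne : b ≠ 0 := fun h => by rw [h, mul_zero] at hab; exact one_ne_zero hab.symm
    have hane : a ≠ 0 := fun h => by rw [h, zero_mul] at hab; exact one_ne_zero hab.symm
    -- twisted linear maps
    have huQ : ∀ z : F, (z + a * z ^ Q) ^ Q = b * (z + a * z ^ Q) := by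
      intro z
      rw [hadd, mul_pow, haQ, hQQ]
      linear_combination (-(z ^ Q)) * hab
    have hvQ : ∀ z : F, (z + b * z ^ Q) ^ Q = a * (z + b * z ^ Q) := by
      intro z
      rw [hadd, mul_pow, hbQ, hQQ]
      linear_combination (-(z ^ Q)) * hab
    -- key identity
    have hkey : ∀ z : F, (a - b) * (z ^ 3 + 3 * z ^ (Q + 2) - z ^ (3 * Q))
        = a * (z + a * z ^ Q) ^ 3 - b * (z + b * z ^ Q) ^ 3 := by
      intro z
      have e1 : z ^ (Q + 2) = z ^ Q * z ^ 2 := pow_add z Q 2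
      have e2 : z ^ (3 * Q) = (z ^ Q) ^ 3 := by rw [mul_comm, pow_mul]
      rw [e1, e2, hb]
      linear_combination (-6 * a * z * (z ^ Q) ^ 2 - 4 * a * (z ^ Q) ^ 3
        + 3 * z * (z ^ Q) ^ 2 + 2 * (z ^ Q) ^ 3) * ha2
    -- cube injectivity on twisted sets
    have hgcd : Nat.gcd 3 (Q - 1) = 1 := by
      have hnd : ¬ ((3:ℕ) ∣ (Q - 1)) := by omega
      exact (Nat.Prime.coprime_iff_not_dvd (by norm_num)).mpr hnd
    have hcube : ∀ c z w : F, c ≠ 0 → z ^ Q = c * z → w ^ Q = c * w →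
        z ^ 3 = w ^ 3 → z = w := by
      intro c z w hc hz hw h3e
      by_cases hw0 : w = 0
      · rw [hw0, zero_pow (by norm_num : (3:ℕ) ≠ 0)] at h3e
        rw [hw0]
        exact pow_eq_zero_iff (by norm_num : (3:ℕ) ≠ 0) |>.mp h3e
      · set r : F := z * w⁻¹ with hrdef
        have hr3 : r ^ 3 = 1 := by
          rw [hrdef, mul_pow, h3e, inv_pow, mul_inv_cancel₀ (pow_ne_zero 3 hw0)]
        have hr0 : r ≠ 0 := fun h => by
          rw [h, zero_pow (by norm_num : (3:ℕ) ≠ 0)] at hr3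
          exact zero_ne_one hr3
        have hrQ : r ^ Q = r := by
          rw [hrdef, mul_pow, inv_pow, hz, hw, mul_inv_rev]
          calc c * z * (w⁻¹ * c⁻¹) = (c * c⁻¹) * (z * w⁻¹) := by ring
            _ = z * w⁻¹ := by rw [mul_inv_cancel₀ hc, one_mul]
        have hrQ1 : r ^ (Q - 1) = 1 := by
          have h' : r ^ (Q - 1) * r = 1 * r := by
            rw [← pow_succ, Nat.sub_add_cancel hQpos, hrQ, one_mul]
          exact mul_right_cancel₀ hr0 h'
        have hd1 : orderOf r ∣ 3 := orderOf_dvd_of_pow_eq_one hr3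
        have hd2 : orderOf r ∣ Q - 1 := orderOf_dvd_of_pow_eq_one hrQ1
        have : orderOf r ∣ 1 := hgcd ▸ Nat.dvd_gcd hd1 hd2
        have hr1 : r = 1 := orderOf_eq_one_iff.mp (Nat.dvd_one.mp this)
        rw [hrdef, ← div_eq_mul_inv] at hr1
        exact (div_eq_one_iff_eq hw0).mp hr1
    -- main injectivity argument
    have h1 : a * ((x + a * x ^ Q) ^ 3 - (y + a * y ^ Q) ^ 3)
        = b * ((x + b * x ^ Q) ^ 3 - (y + b * y ^ Q) ^ 3) := by
      linear_combination (hkey y) - (hkey x) + (a - b) * hxy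
    set S : F := (x + a * x ^ Q) ^ 3 - (y + a * y ^ Q) ^ 3 with hSdef
    set T : F := (x + b * x ^ Q) ^ 3 - (y + b * y ^ Q) ^ 3 with hTdef
    have hSQ : S ^ Q = -S := by
      rw [hSdef, hsub, ← pow_mul, ← pow_mul, mul_comm 3 Q, pow_mul, pow_mul,
        huQ, huQ, mul_pow, mul_pow, hb3]
      ring
    have hTQ : T ^ Q = -T := by
      have ha3 : a ^ 3 = -1 := by
        rw [hadef]; linear_combination -hω3
      rw [hTdef, hsub, ← pow_mul, ← pow_mul, mul_comm 3 Q, pow_mul, pow_mul,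
        hvQ, hvQ, mul_pow, mul_pow, ha3]
      ring
    have h2 : b * S = a * T := by
      have := congrArg (fun t : F => t ^ Q) h1
      simp only [mul_pow, haQ, hbQ, hSQ, hTQ] at this
      have h' : b * (-S) = a * (-T) := this
      linear_combination -h'
    have hS0 : S = 0 := by
      have e1 : a * (a * S) = a * (b * T) := congrArg (a * ·) h1
      have e2 : b * (b * S) = b * (a * T) := congrArg (b * ·) h2
      have e3 : a ^ 2 * S = T := by
        rw [← mul_assoc, ← sq] at e1
        rw [e1]; rw [← mul_assoc, hab, one_mul]
      have e4 : b ^ 2 * S = T := by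
        rw [← mul_assoc, ← sq] at e2
        rw [e2]; rw [← mul_assoc, mul_comm b a, hab, one_mul]
      have e5 : (a ^ 2 - b ^ 2) * S = 0 := by
        rw [sub_mul, e3, e4, sub_self]
      have hapb : a + b = 1 := by rw [hb]; ring
      have e6 : (a - b) * S = 0 := by
        have : a ^ 2 - b ^ 2 = (a - b) * (a + b) := by ring
        rw [this, hapb, mul_one] at e5
        exact e5
      rcases mul_eq_zero.mp e6 with h | h
      · exact absurd h habne
      · exact h
    have hT0 : T = 0 := by
      have hT : b * T = 0 := by rw [← h1, hS0, mul_zero]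
      rcases mul_eq_zero.mp hT with h | h
      · exact absurd h hbne
      · exact h
    have hu : x + a * x ^ Q = y + a * y ^ Q :=
      hcube b _ _ hbne (huQ x) (huQ y) (by rw [← sub_eq_zero]; exact hS0)
    have hv : x + b * x ^ Q = y + b * y ^ Q :=
      hcube a _ _ hane (hvQ x) (hvQ y) (by rw [← sub_eq_zero]; exact hT0)
    have hxQ : x ^ Q = y ^ Q := by
      have : (a - b) * x ^ Q = (a - b) * y ^ Q := by
        linear_combination hu - hv
      exact mul_left_cancel₀ habne this
    calc x = (x ^ Q) ^ Q := (hQQ x).symm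
      _ = (y ^ Q) ^ Q := by rw [hxQ]
      _ = y := hQQ y
end

section
/- Let Q be a prime power, r a positive integer, β ∈ F_{Q^2} with β^{Q+1} = 1, and h ∈ F_{Q^2}[x] of degree d with h(0) ≠ 0 satisfying (x^d · h(1/x))^Q = β · h(x^Q) (as an identity of polynomials, where x^d h(1/x) is the reversal of h and the Q-th power is applied coefficientwise via Frobenius). Then f(x) := x^r · h(x^{Q-1}) permutes F_{Q^2} if and only if gcd(r, Q-1) = 1, gcd(r - d, Q+1) = 1, and h has no roots in μ_{Q+1} = {x ∈ F_{Q^2} : x^{Q+1} = 1}. -/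
/-!
Since `x ↦ x ^ (Q - 1)` maps `Fˣ` onto `μ_{Q+1}` and
`(x ^ r * h(x ^ (Q - 1))) ^ (Q - 1) = u ^ r * h(u) ^ (Q - 1)` for `u = x ^ (Q - 1)`, the map
`x ↦ x ^ r * h(x ^ (Q - 1))` permutes `F` iff `h` has no roots in `μ_{Q+1}`, `gcd(r, Q - 1) = 1`
and `u ↦ u ^ r * h(u) ^ (Q - 1)` is injective on `μ_{Q+1}`. Evaluating the self-reciprocity
identity at `u ∈ μ_{Q+1}`, where `u⁻¹ = u ^ Q`, gives `h(u) ^ (Q - 1) = β * u ^ (-d)`, so the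
latter map is `u ↦ β * u ^ (r - d)`, injective on the cyclic group `μ_{Q+1}` iff
`gcd(r - d, Q + 1) = 1`.
-/

open Polynomial

lemma eq_one_of_zpow_eq_one_of_gcd_eq_one {G₀ : Type*} [GroupWithZero G₀] {w : G₀}
    (hw : w ≠ 0) {k l : ℤ} (hkl : k.gcd l = 1) (hk : w ^ k = 1) (hl : w ^ l = 1) : w = 1 := by
  have := (pow_intGCD_eq_one (a := Units.mk0 w hw) (m := k) (n := l)).mpr
    ⟨Units.ext (by simpa), Units.ext (by simpa)⟩
  rw [hkl, pow_one] at this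
  exact congrArg Units.val this

namespace FiniteField

variable {F : Type*} [Field F] [Fintype F]

lemma exists_orderOf_eq_prime {p : ℕ} [Fact p.Prime] (hp : p ∣ Fintype.card F - 1) :
    ∃ ζ : F, orderOf ζ = p := by
  obtain ⟨ζ, hζ⟩ := exists_prime_orderOf_dvd_card' (G := Fˣ) p
    (by rwa [Nat.card_units, Nat.card_eq_fintype_card])
  exact ⟨ζ, by rwa [orderOf_units]⟩

lemma injOn_zpow_iff {m : ℕ} (hm : m ∣ Fintype.card F - 1) (k : ℤ) :
    {u : F | u ^ m = 1}.InjOn (· ^ k) ↔ k.gcd m = 1 := by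
  constructor
  · intro hinj
    by_contra hkm
    obtain ⟨p, hp, hpkm⟩ := Nat.exists_prime_and_dvd hkm
    have : Fact p.Prime := ⟨hp⟩
    have hpm : p ∣ m := hpkm.trans (Int.natCast_dvd_natCast.mp (Int.gcd_dvd_right k m))
    obtain ⟨ζ, hζ⟩ := exists_orderOf_eq_prime (F := F) (hpm.trans hm)
    obtain ⟨j, rfl⟩ : (p : ℤ) ∣ k :=
      (Int.natCast_dvd_natCast.mpr hpkm).trans (Int.gcd_dvd_left _ _)
    have hζp : ζ ^ p = 1 := hζ ▸ pow_orderOf_eq_one ζ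
    have hζ1 : ζ = 1 := hinj (orderOf_dvd_iff_pow_eq_one.mp (hζ ▸ hpm)) (one_pow m)
      (by simp [zpow_mul, hζp])
    exact hp.one_lt.ne' (by rw [← hζ, hζ1, orderOf_one])
  · intro hkm u hu v hv huv
    have hm0 : m ≠ 0 :=
      (Nat.pos_of_dvd_of_pos hm (Nat.sub_pos_of_lt Fintype.one_lt_card)).ne'
    have hv0 : v ≠ 0 := by rintro rfl; simp [hm0] at hv
    have hu0 : u ≠ 0 := by rintro rfl; simp [hm0] at hu
    rw [← div_eq_one_iff_eq hv0]
    refine eq_one_of_zpow_eq_one_of_gcd_eq_one (div_ne_zero hu0 hv0) hkm ?_ ?_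
    · simp only [div_zpow, huv, div_self (zpow_ne_zero k hv0)]
    · simp only [zpow_natCast, div_pow, hu.out, hv.out, div_one]

variable {s n : ℕ}

lemma pow_pow_eq_one_of_mul_eq_card_sub_one (hsn : s * n = Fintype.card F - 1) {x : F}
    (hx : x ≠ 0) : (x ^ s) ^ n = 1 := by
  rw [← pow_mul, hsn]
  exact pow_card_sub_one_eq_one x hx

lemma ne_zero_of_mul_eq_card_sub_one (hsn : s * n = Fintype.card F - 1) : s ≠ 0 ∧ n ≠ 0 := by
  rw [← mul_ne_zero_iff, hsn]
  exact (Nat.sub_pos_of_lt Fintype.one_lt_card).ne'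

lemma exists_pow_eq_of_pow_eq_one (hsn : s * n = Fintype.card F - 1) {α : F}
    (hα : α ^ n = 1) : ∃ x : F, x ^ s = α := by
  have hpos : 0 < s * n :=
    Nat.pos_of_ne_zero (mul_ne_zero_iff.mpr (ne_zero_of_mul_eq_card_sub_one hsn))
  have : NeZero n := ⟨(ne_zero_of_mul_eq_card_sub_one hsn).2⟩
  obtain ⟨g, hg⟩ := IsCyclic.exists_ofOrder_eq_natCard (α := Fˣ)
  have hprim : IsPrimitiveRoot (g : F) (s * n) := by
    rw [hsn, ← Nat.card_eq_fintype_card, ← Nat.card_units, ← hg, ← orderOf_units]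
    exact IsPrimitiveRoot.orderOf _
  obtain ⟨i, -, hi⟩ := (hprim.pow hpos rfl).eq_pow_of_pow_eq_one hα
  exact ⟨(g : F) ^ i, by rw [← pow_mul, mul_comm, pow_mul, hi]⟩

variable {r : ℕ} (h : F[X])

lemma eval_ne_zero_of_injective (hsn : s * n = Fintype.card F - 1) (hr : r ≠ 0)
    (hf : Function.Injective fun x : F => x ^ r * h.eval (x ^ s)) {α : F} (hα : α ^ n = 1) :
    h.eval α ≠ 0 := by
  intro h0
  obtain ⟨hs, hn⟩ := ne_zero_of_mul_eq_card_sub_one hsn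
  obtain ⟨x, rfl⟩ := exists_pow_eq_of_pow_eq_one hsn hα
  obtain rfl : x = 0 := hf (by simp [h0, hr])
  simp [hs, hn] at hα

lemma gcd_eq_one_of_injective (hsn : s * n = Fintype.card F - 1)
    (hf : Function.Injective fun x : F => x ^ r * h.eval (x ^ s)) : r.gcd s = 1 := by
  rw [← Int.gcd_natCast_natCast, ← injOn_zpow_iff (Dvd.intro n hsn)]
  intro u hu v hv huv
  apply hf
  simp only [zpow_natCast] at huv
  simp only [hu.out, hv.out, huv]

lemma injOn_of_surjective (hsn : s * n = Fintype.card F - 1) (hr : r ≠ 0)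
    (hnz : ∀ α : F, α ^ n = 1 → h.eval α ≠ 0)
    (hf : Function.Surjective fun x : F => x ^ r * h.eval (x ^ s)) :
    {u : F | u ^ n = 1}.InjOn fun u => u ^ r * h.eval u ^ s := by
  obtain ⟨hs, hn⟩ := ne_zero_of_mul_eq_card_sub_one hsn
  have hmaps : Set.MapsTo (fun u => u ^ r * h.eval u ^ s) {u | u ^ n = 1} {u | u ^ n = 1} := by
    intro u hu
    simp only [Set.mem_ofPred_eq, mul_pow, pow_right_comm u r n, hu.out, one_pow, one_mul]
    exact pow_pow_eq_one_of_mul_eq_card_sub_one hsn (hnz u hu)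
  refine (((Set.toFinite _).surjOn_iff_bijOn_of_mapsTo hmaps).mp ?_).injOn
  intro w hw
  obtain ⟨z, rfl⟩ := exists_pow_eq_of_pow_eq_one hsn hw
  obtain ⟨x, rfl⟩ := hf z
  have hx : x ≠ 0 := by rintro rfl; simp [hr, hs, hn] at hw
  exact ⟨x ^ s, pow_pow_eq_one_of_mul_eq_card_sub_one hsn hx,
    by simp only [mul_pow, pow_right_comm x s r]⟩

lemma injective_of_injOn (hsn : s * n = Fintype.card F - 1) (hr : r ≠ 0)
    (hnz : ∀ α : F, α ^ n = 1 → h.eval α ≠ 0) (hrs : r.gcd s = 1)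
    (hS : {u : F | u ^ n = 1}.InjOn fun u => u ^ r * h.eval u ^ s) :
    Function.Injective fun x : F => x ^ r * h.eval (x ^ s) := by
  have hμ {x : F} (hx : x ≠ 0) : (x ^ s) ^ n = 1 := pow_pow_eq_one_of_mul_eq_card_sub_one hsn hx
  have hf0 (x : F) : x ^ r * h.eval (x ^ s) = 0 ↔ x = 0 := by
    refine ⟨fun h0 => ?_, by rintro rfl; simp [hr]⟩
    by_contra hx
    exact mul_ne_zero (pow_ne_zero r hx) (hnz _ (hμ hx)) h0
  intro x y hxy
  simp only at hxy
  by_cases hx : x = 0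
  · rw [hx, eq_comm, ← hf0 y, ← hxy, hf0, hx]
  have hy : y ≠ 0 := by rwa [ne_eq, ← hf0, ← hxy, hf0]
  have hxys : x ^ s = y ^ s := hS (hμ hx) (hμ hy) (by
    simp only [pow_right_comm _ s r, ← mul_pow, hxy])
  have hxyr : x ^ r = y ^ r := by
    rw [hxys] at hxy
    exact mul_right_cancel₀ (hnz _ (hμ hy)) hxy
  rw [← div_eq_one_iff_eq hy]
  refine (pow_eq_one_iff_of_coprime hrs).mp ⟨?_, ?_⟩
  · rw [div_pow, hxyr, div_self (pow_ne_zero r hy)]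
  · rw [div_pow, hxys, div_self (pow_ne_zero s hy)]

theorem bijective_pow_mul_eval_pow_iff (hsn : s * n = Fintype.card F - 1) (hr : r ≠ 0) :
    Function.Bijective (fun x : F => x ^ r * h.eval (x ^ s)) ↔
      (∀ α : F, α ^ n = 1 → h.eval α ≠ 0) ∧ r.gcd s = 1 ∧
        {u : F | u ^ n = 1}.InjOn fun u => u ^ r * h.eval u ^ s := by
  refine ⟨fun hf => ?_, fun ⟨hnz, hrs, hS⟩ => ?_⟩
  · have hnz := fun α => eval_ne_zero_of_injective h hsn hr hf.1 (α := α)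
    exact ⟨hnz, gcd_eq_one_of_injective h hsn hf.1, injOn_of_surjective h hsn hr hnz hf.2⟩
  · exact Finite.injective_iff_bijective.mp (injective_of_injOn h hsn hr hnz hrs hS)

end FiniteField

section SelfReciprocal

variable {F : Type*} [Field F] {Q : ℕ} {β : F} {h : F[X]}

lemma eval_pow_mul_pow_natDegree (hrev : h.reverse ^ Q = C β * expand F Q h) {α : F}
    (hα : α ^ (Q + 1) = 1) : h.eval α ^ Q * α ^ h.natDegree = β * h.eval α := by
  have hα0 : α ≠ 0 := by rintro rfl; simp at hα
  have hinv : α⁻¹ ^ Q = α := by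
    rw [inv_pow, eq_inv_of_mul_eq_one_left (by rwa [← pow_succ] : α ^ Q * α = 1), inv_inv]
  let _ : Invertible α := invertibleOfNonzero hα0
  have hrα : h.reverse.eval α⁻¹ * α ^ h.natDegree = h.eval α := by
    simpa [invOf_eq_inv] using eval₂_reverse_mul_pow (RingHom.id F) α h
  have hrevα : h.reverse.eval α⁻¹ ^ Q = β * h.eval α := by
    simpa [expand_eval, hinv] using congrArg (eval α⁻¹) hrev
  calc h.eval α ^ Q * α ^ h.natDegree
      = h.reverse.eval α⁻¹ ^ Q * (α ^ (Q + 1)) ^ h.natDegree := by rw [← hrα]; ring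
    _ = β * h.eval α := by rw [hrevα, hα, one_pow, mul_one]

theorem injOn_pow_mul_eval_pow_iff [Fintype F] (r : ℕ) (hQ : Q ≠ 0)
    (hQF : Q + 1 ∣ Fintype.card F - 1) (hrev : h.reverse ^ Q = C β * expand F Q h)
    (hnz : ∀ α : F, α ^ (Q + 1) = 1 → h.eval α ≠ 0) :
    {u : F | u ^ (Q + 1) = 1}.InjOn (fun u => u ^ r * h.eval u ^ (Q - 1)) ↔
      Int.gcd ((r : ℤ) - h.natDegree) ((Q : ℤ) + 1) = 1 := by
  have hS : Set.EqOn (fun u => u ^ r * h.eval u ^ (Q - 1))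
      (fun u => β * u ^ ((r : ℤ) - h.natDegree)) {u | u ^ (Q + 1) = 1} := by
    intro u hu
    have hu0 : u ≠ 0 := by rintro rfl; simp at hu
    have hβu : h.eval u ^ (Q - 1) * u ^ h.natDegree = β := by
      refine mul_right_cancel₀ (hnz u hu) ?_
      rw [← eval_pow_mul_pow_natDegree hrev hu, mul_right_comm, ← pow_succ,
        Nat.sub_add_cancel (Nat.pos_of_ne_zero hQ)]
    simp only [zpow_sub₀ hu0, zpow_natCast, ← hβu]
    field_simp
  have hβ : β ≠ 0 := by
    have h1 := hS (one_pow (Q + 1))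
    simp only [one_pow, one_mul, one_zpow, mul_one] at h1
    exact h1 ▸ pow_ne_zero _ (hnz 1 (one_pow _))
  rw [hS.injOn_iff, show (Q : ℤ) + 1 = ((Q + 1 : ℕ) : ℤ) by push_cast; rfl,
    ← FiniteField.injOn_zpow_iff hQF]
  simp only [Set.InjOn, mul_right_inj' hβ]

end SelfReciprocal

theorem stmt_14_general (Q : ℕ)
    (F : Type*) [Field F] [Fintype F] (hF : Fintype.card F = Q ^ 2)
    (r : ℕ) (hr : 0 < r)
    (β : F)
    (h : Polynomial F) (d : ℕ) (hd : h.natDegree = d)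
    (hrev : h.reverse ^ Q = Polynomial.C β * Polynomial.expand F Q h) :
    Function.Bijective (fun x : F => x ^ r * h.eval (x ^ (Q - 1))) ↔
      (Nat.gcd r (Q - 1) = 1 ∧ Int.gcd ((r : ℤ) - d) ((Q : ℤ) + 1) = 1 ∧
        ∀ α : F, α ^ (Q + 1) = 1 → h.eval α ≠ 0) := by
  subst hd
  have hsn : (Q - 1) * (Q + 1) = Fintype.card F - 1 := by
    rw [hF, mul_comm, ← Nat.sq_sub_sq, one_pow]
  have hQ : Q ≠ 0 := by
    rintro rfl
    simp at hF
  rw [FiniteField.bijective_pow_mul_eval_pow_iff h hsn hr.ne']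
  have hS := injOn_pow_mul_eval_pow_iff r hQ (Dvd.intro_left _ hsn) hrev
  exact ⟨fun ⟨hnz, hrs, hinj⟩ => ⟨hrs, (hS hnz).mp hinj, hnz⟩,
    fun ⟨hrs, hrd, hnz⟩ => ⟨hnz, hrs, (hS hnz).mpr hrd⟩⟩

theorem stmt_14 (p e Q : ℕ) (hp : p.Prime) (he : 0 < e) (hQ : Q = p ^ e)
    (F : Type*) [Field F] [Fintype F] (hF : Fintype.card F = Q ^ 2)
    (r : ℕ) (hr : 0 < r)
    (β : F) (hβ : β ^ (Q + 1) = 1)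
    (h : Polynomial F) (d : ℕ) (hd : h.natDegree = d) (h0 : h.coeff 0 ≠ 0)
    (hrev : h.reverse ^ Q = Polynomial.C β * Polynomial.expand F Q h) :
    Function.Bijective (fun x : F => x ^ r * h.eval (x ^ (Q - 1))) ↔
      (Nat.gcd r (Q - 1) = 1 ∧ Int.gcd ((r : ℤ) - d) ((Q : ℤ) + 1) = 1 ∧
        ∀ α : F, α ^ (Q + 1) = 1 → h.eval α ≠ 0) :=
  stmt_14_general Q F hF r hr β h d hd hrev
end

section
/- Let Q be a prime power, β ∈ F_{Q^2} with β^{Q+1} = 1, and h = Σ_{i=0}^d a_i x^i ∈ F_{Q^2}[x] with a_0 ≠ 0 and a_{d-i} = (β a_i)^Q for 0 ≤ i ≤ d. Suppose h has no roots in μ_{Q+1}. Then for every α ∈ F_{Q^2} with α^{Q+1} = 1, one has h(α)^Q / h(α) = α^{-d} β. -/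
/-!
Since `Q` is a power of the characteristic, `x ↦ x ^ Q` is additive, so `h(α) ^ Q` is the sum of
the terms `a i ^ Q * α ^ (Q * i)`. On `μ_{Q+1}` we have `α ^ (Q * i) * α ^ d = α ^ (d - i)`, and the
coefficient condition gives `a i ^ Q = β * a (d - i)`; hence, reindexing `i ↦ d - i`,
`h(α) ^ Q * α ^ d = β * h(α)`.
-/

open Finset

theorem FiniteField.charP_of_card_eq_prime_pow {K : Type*} [Field K] [Fintype K] {p n : ℕ}
    (hp : p.Prime) (hK : Fintype.card K = p ^ n) : CharP K p := by
  obtain ⟨q, hqK, m, hq, hcard⟩ := FiniteField.card' K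
  have hqp : q ∣ p ^ n := hK ▸ hcard ▸ dvd_pow_self q m.ne_zero
  rwa [← (Nat.prime_dvd_prime_iff_eq hq hp).mp (hq.dvd_of_dvd_pow hqp)]

theorem pow_eq_mul_of_eq_mul_pow {M : Type*} [CommMonoid M] {β x y : M} {Q : ℕ}
    (hβ : β ^ (Q + 1) = 1) (hy : y = (β * x) ^ Q) : x ^ Q = β * y := by
  rw [hy, mul_pow, ← mul_assoc, ← pow_succ', hβ, one_mul]

theorem pow_pow_mul_pow_of_le {M : Type*} [CommMonoid M] {α : M} {Q i d : ℕ}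
    (hα : α ^ (Q + 1) = 1) (hi : i ≤ d) : (α ^ i) ^ Q * α ^ d = α ^ (d - i) := by
  calc (α ^ i) ^ Q * α ^ d = (α ^ i) ^ Q * (α ^ i * α ^ (d - i)) := by
        rw [← pow_add, Nat.add_sub_cancel' hi]
    _ = (α ^ (Q + 1)) ^ i * α ^ (d - i) := by rw [← mul_assoc, ← pow_succ, pow_right_comm]
    _ = α ^ (d - i) := by rw [hα, one_pow, one_mul]

section Frobenius

variable {R : Type*} [CommSemiring R] {p e d : ℕ} [ExpChar R p] {α β : R} {a : ℕ → R}

theorem sum_pow_mul_pow_eq_mul_sum_of_coeff_reflect (hβ : β ^ (p ^ e + 1) = 1)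
    (hα : α ^ (p ^ e + 1) = 1) (hcoef : ∀ i ≤ d, a (d - i) = (β * a i) ^ p ^ e) :
    (∑ i ∈ range (d + 1), a i * α ^ i) ^ p ^ e * α ^ d =
      β * ∑ i ∈ range (d + 1), a i * α ^ i := by
  have hterm : ∀ i ∈ range (d + 1),
      (a i * α ^ i) ^ p ^ e * α ^ d = β * (a (d - i) * α ^ (d - i)) := by
    intro i hi
    have hi : i ≤ d := Nat.lt_succ_iff.mp (mem_range.mp hi)
    rw [mul_pow, mul_assoc, pow_pow_mul_pow_of_le hα hi,
      pow_eq_mul_of_eq_mul_pow hβ (hcoef i hi), mul_assoc]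
  rw [sum_pow_char_pow, sum_mul, sum_congr rfl hterm, ← mul_sum,
    ← sum_range_reflect (fun i => a i * α ^ i)]
  simp only [add_tsub_cancel_right]

end Frobenius

theorem stmt_15_general (p e Q : ℕ) (hp : p.Prime) (hQ : Q = p ^ e)
    (F : Type*) [Field F] [Fintype F] (hF : Fintype.card F = Q ^ 2)
    (β : F) (hβ : β ^ (Q + 1) = 1)
    (d : ℕ) (a : ℕ → F) (h : Polynomial F)
    (hh : h = ∑ i ∈ Finset.range (d + 1), Polynomial.C (a i) * Polynomial.X ^ i)
    (hcoef : ∀ i ≤ d, a (d - i) = (β * a i) ^ Q)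
    (hroots : ∀ α : F, α ^ (Q + 1) = 1 → h.eval α ≠ 0) :
    ∀ α : F, α ^ (Q + 1) = 1 →
      h.eval α ^ Q / h.eval α = (α⁻¹) ^ d * β := by
  intro α hα
  subst hQ
  have := FiniteField.charP_of_card_eq_prime_pow hp (hF.trans (pow_mul p e 2).symm)
  have := ExpChar.prime (R := F) hp
  have hα0 : α ≠ 0 := by rintro rfl; simp at hα
  have hne := hroots α hα
  have key := sum_pow_mul_pow_eq_mul_sum_of_coeff_reflect hβ hα hcoef
  have heval : h.eval α = ∑ i ∈ range (d + 1), a i * α ^ i := by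
    simp [hh, Polynomial.eval_finsetSum]
  rw [← heval] at key
  rw [div_eq_iff hne, inv_pow, mul_assoc, ← key, mul_comm, mul_assoc,
    mul_inv_cancel₀ (pow_ne_zero d hα0), mul_one]

theorem stmt_15 (p e Q : ℕ) (hp : p.Prime) (he : 0 < e) (hQ : Q = p ^ e)
    (F : Type*) [Field F] [Fintype F] (hF : Fintype.card F = Q ^ 2)
    (β : F) (hβ : β ^ (Q + 1) = 1)
    (d : ℕ) (a : ℕ → F) (h : Polynomial F)
    (hh : h = ∑ i ∈ Finset.range (d + 1), Polynomial.C (a i) * Polynomial.X ^ i)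
    (h0 : a 0 ≠ 0) (hcoef : ∀ i ≤ d, a (d - i) = (β * a i) ^ Q)
    (hroots : ∀ α : F, α ^ (Q + 1) = 1 → h.eval α ≠ 0) :
    ∀ α : F, α ^ (Q + 1) = 1 →
      h.eval α ^ Q / h.eval α = (α⁻¹) ^ d * β :=
  stmt_15_general p e Q hp hQ F hF β hβ d a h hh hcoef hroots
end
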